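/- arXiv:1412.1022 — 9 statements merged into one kernel-verified Lean document; each statement's English description precedes it below -/
import Mathlib

section
/- Let A be an n×n real symmetric matrix with nonnegative entries that is irreducible, meaning that for every pair of indices u, v there exists a positive integer r with (A^r)(u,v) > 0. Let Q be an n×m real matrix (m ≥ 1) with nonnegative entries such that Qᵀ Q = I_m, every row of Q is nonzero, and A Q = Q B where B = Qᵀ A Q. Then the largest eigenvalue of A equals the largest eigenvalue of B, and this common value is a simple root of the characteristic polynomial of A and also a simple root of the characteristic polynomial of B. -/
/-!
The largest eigenvalue `μ` of a symmetric matrix bounds its Rayleigh quotient, with equality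
exactly on the `μ`-eigenvectors. For a nonnegative matrix, `|x|` has at least the Rayleigh quotient
of `x`, so `|x|` is a `μ`-eigenvector whenever `x` is, and irreducibility makes a nonnegative
eigenvector strictly positive. Hence no `μ`-eigenvector vanishes at a coordinate, which forces the
`μ`-eigenspace to be a line: `μ` is a simple root with a positive eigenvector (Perron–Frobenius).

`B = QᵀAQ` is again symmetric, nonnegative and irreducible. `Q` maps eigenvectors of `B` to
eigenvectors of `A`, and since `QᵀA = BQᵀ`, `Qᵀ` maps the positive Perron vector of `A` to a nonzero
eigenvector of `B`; so the two Perron roots bound each other.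
-/

open Matrix Polynomial
open scoped MatrixOrder

namespace Matrix

section Eigenvectors

variable {R m n : Type*} [CommSemiring R] [Fintype n]

theorem pow_mulVec_eq_pow_smul [DecidableEq n] {M : Matrix n n R} {x : n → R} {t : R}
    (hx : M *ᵥ x = t • x) (r : ℕ) : (M ^ r) *ᵥ x = t ^ r • x := by
  induction r with
  | zero => simp
  | succ r ih => rw [pow_succ', ← mulVec_mulVec, ih, mulVec_smul, hx, smul_smul, ← pow_succ]

theorem mulVec_mulVec_eq_smul_of_mul_eq_mul [Fintype m] {A : Matrix n n R} {Q : Matrix n m R}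
    {B : Matrix m m R} (h : A * Q = Q * B) {w : m → R} {t : R} (hw : B *ᵥ w = t • w) :
    A *ᵥ (Q *ᵥ w) = t • (Q *ᵥ w) := by
  rw [mulVec_mulVec, h, ← mulVec_mulVec, hw, mulVec_smul]

theorem pow_mul_eq_mul_pow_of_mul_eq_mul [Fintype m] [DecidableEq m] [DecidableEq n]
    {A : Matrix n n R} {Q : Matrix n m R} {B : Matrix m m R} (h : A * Q = Q * B) (r : ℕ) :
    A ^ r * Q = Q * B ^ r := by
  induction r with
  | zero => simp
  | succ r ih => rw [pow_succ, Matrix.mul_assoc, h, ← Matrix.mul_assoc, ih, Matrix.mul_assoc,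
      ← pow_succ]

theorem IsSymm.transpose_mul_mul {A : Matrix n n R} (hA : A.IsSymm) (Q : Matrix n m R) :
    (Qᵀ * A * Q).IsSymm := by
  rw [IsSymm, transpose_mul, transpose_mul, transpose_transpose, hA.eq, Matrix.mul_assoc]

theorem mem_roots_charpoly_of_mulVec_eq_smul {K : Type*} [Field K] [DecidableEq n]
    {M : Matrix n n K} {x : n → K} {t : K} (hx : x ≠ 0) (h : M *ᵥ x = t • x) :
    t ∈ M.charpoly.roots := by
  have hspec : t ∈ spectrum K M := by
    rw [← spectrum_toLin']
    exact (Module.End.hasEigenvalue_of_hasEigenvector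
      (Module.End.hasEigenvector_iff.2 ⟨Module.End.mem_eigenspace_iff.2 h, hx⟩)).mem_spectrum
  rwa [mem_roots M.charpoly_monic.ne_zero, ← mem_spectrum_iff_isRoot_charpoly]

end Eigenvectors

section Nonneg

variable {α ι κ ν : Type*} [CommRing α] [LinearOrder α] [IsStrictOrderedRing α] [Fintype κ]

theorem mul_apply_nonneg {A : Matrix ι κ α} {B : Matrix κ ν α} (hA : ∀ i k, 0 ≤ A i k)
    (hB : ∀ k j, 0 ≤ B k j) (i : ι) (j : ν) : 0 ≤ (A * B) i j :=
  Finset.sum_nonneg fun k _ => mul_nonneg (hA i k) (hB k j)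

theorem mul_apply_pos {A : Matrix ι κ α} {B : Matrix κ ν α} (hA : ∀ i k, 0 ≤ A i k)
    (hB : ∀ k j, 0 ≤ B k j) {i : ι} {k : κ} {j : ν} (hik : 0 < A i k) (hkj : 0 < B k j) :
    0 < (A * B) i j :=
  Finset.sum_pos' (fun k _ => mul_nonneg (hA i k) (hB k j))
    ⟨k, Finset.mem_univ k, mul_pos hik hkj⟩

theorem exists_apply_pos_of_transpose_mul_self_eq_one [DecidableEq ν] {Q : Matrix κ ν α}
    (hQ : ∀ k j, 0 ≤ Q k j) (hQQ : Qᵀ * Q = 1) (j : ν) : ∃ k, 0 < Q k j := by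
  by_contra! h
  have hdiag := congrFun (congrFun hQQ j) j
  rw [one_apply_eq, mul_apply, Finset.sum_eq_zero fun k _ => ?_] at hdiag
  · exact zero_ne_one hdiag
  · rw [transpose_apply, le_antisymm (h k) (hQ k j), mul_zero]

theorem dotProduct_mulVec_le_abs {M : Matrix κ κ α} (hM : ∀ i j, 0 ≤ M i j) (x : κ → α) :
    x ⬝ᵥ M *ᵥ x ≤ |x| ⬝ᵥ M *ᵥ |x| := by
  simp only [dotProduct, mulVec, Finset.mul_sum]
  refine Finset.sum_le_sum fun i _ => Finset.sum_le_sum fun j _ => ?_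
  calc x i * (M i j * x j) ≤ |x i * (M i j * x j)| := le_abs_self _
    _ = |x| i * (M i j * |x| j) := by simp [abs_mul, abs_of_nonneg (hM i j)]

theorem IsIrreducible.pos_of_mulVec_eq_smul [DecidableEq κ] {M : Matrix κ κ α}
    (hM : M.IsIrreducible) {y : κ → α} {t : α} (hy : M *ᵥ y = t • y) (hy0 : 0 ≤ y)
    (hyne : y ≠ 0) (i : κ) : 0 < y i := by
  obtain ⟨j, hj⟩ := Function.ne_iff.1 hyne
  obtain ⟨r, -, hr⟩ := (isIrreducible_iff_exists_pow_pos hM.nonneg).1 hM i j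
  have hsum : 0 < ((M ^ r) *ᵥ y) i :=
    Finset.sum_pos' (fun k _ => mul_nonneg (pow_apply_nonneg hM.nonneg r i k) (hy0 k))
      ⟨j, Finset.mem_univ j, mul_pos hr ((hy0 j).lt_of_ne' hj)⟩
  rw [pow_mulVec_eq_pow_smul hy, Pi.smul_apply, smul_eq_mul] at hsum
  exact (hy0 i).lt_of_ne' (right_ne_zero_of_mul hsum.ne')

theorem IsIrreducible.transpose_mul_mul_of_mul_eq_mul [DecidableEq κ] [Fintype ν]
    [DecidableEq ν] {A : Matrix κ κ α} {Q : Matrix κ ν α} (hA : A.IsIrreducible)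
    (hQ : ∀ k j, 0 ≤ Q k j) (hQQ : Qᵀ * Q = 1) (hAQ : A * Q = Q * (Qᵀ * A * Q)) :
    (Qᵀ * A * Q).IsIrreducible := by
  have hQt : ∀ j k, 0 ≤ Qᵀ j k := fun j k => hQ k j
  have hpow (r : ℕ) : (Qᵀ * A * Q) ^ r = Qᵀ * A ^ r * Q := by
    rw [Matrix.mul_assoc Qᵀ (A ^ r), pow_mul_eq_mul_pow_of_mul_eq_mul hAQ, ← Matrix.mul_assoc,
      hQQ, Matrix.one_mul]
  rw [isIrreducible_iff_exists_pow_pos (mul_apply_nonneg (mul_apply_nonneg hQt hA.nonneg) hQ)]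
  intro c d
  obtain ⟨u, hu⟩ := exists_apply_pos_of_transpose_mul_self_eq_one hQ hQQ c
  obtain ⟨v, hv⟩ := exists_apply_pos_of_transpose_mul_self_eq_one hQ hQQ d
  obtain ⟨r, hr, hAr⟩ := (isIrreducible_iff_exists_pow_pos hA.nonneg).1 hA u v
  refine ⟨r, hr, ?_⟩
  rw [hpow]
  have hApow := pow_apply_nonneg hA.nonneg r
  exact mul_apply_pos (mul_apply_nonneg hQt hApow) hQ (mul_apply_pos hQt hApow hu hAr) hv

end Nonneg

section Symmetric

variable {ι : Type*} [Fintype ι] [DecidableEq ι] {M : Matrix ι ι ℝ} {μ : ℝ}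

theorem posSemidef_smul_one_sub (hM : M.IsHermitian) (hμ : ∀ t ∈ spectrum ℝ M, t ≤ μ) :
    (μ • 1 - M).PosSemidef := by
  rw [← Algebra.algebraMap_eq_smul_one]
  exact (le_algebraMap_iff_spectrum_le hM).2 hμ

theorem dotProduct_mulVec_le (hM : M.IsHermitian) (hμ : ∀ t ∈ spectrum ℝ M, t ≤ μ)
    (x : ι → ℝ) : x ⬝ᵥ M *ᵥ x ≤ μ * (x ⬝ᵥ x) := by
  have := (posSemidef_smul_one_sub hM hμ).dotProduct_mulVec_nonneg x
  rwa [sub_mulVec, smul_mulVec, one_mulVec, star_trivial, dotProduct_sub, dotProduct_smul,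
    smul_eq_mul, sub_nonneg] at this

theorem mulVec_eq_smul_of_dotProduct_mulVec_eq (hM : M.IsHermitian)
    (hμ : ∀ t ∈ spectrum ℝ M, t ≤ μ) {x : ι → ℝ} (h : x ⬝ᵥ M *ᵥ x = μ * (x ⬝ᵥ x)) :
    M *ᵥ x = μ • x := by
  have := (posSemidef_smul_one_sub hM hμ).dotProduct_mulVec_zero_iff x
  rw [sub_mulVec, smul_mulVec, one_mulVec, star_trivial, dotProduct_sub, dotProduct_smul,
    smul_eq_mul, h, sub_self, sub_eq_zero] at this
  exact (this.1 rfl).symm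

theorem mulVec_abs_eq_smul (hM : M.IsHermitian) (hnn : ∀ i j, 0 ≤ M i j)
    (hμ : ∀ t ∈ spectrum ℝ M, t ≤ μ) {x : ι → ℝ} (hx : M *ᵥ x = μ • x) :
    M *ᵥ |x| = μ • |x| := by
  have habs : |x| ⬝ᵥ |x| = x ⬝ᵥ x := by simp [dotProduct, abs_mul_abs_self]
  refine mulVec_eq_smul_of_dotProduct_mulVec_eq hM hμ
    (le_antisymm (dotProduct_mulVec_le hM hμ |x|) ?_)
  calc μ * (|x| ⬝ᵥ |x|) = x ⬝ᵥ M *ᵥ x := by rw [habs, hx, dotProduct_smul, smul_eq_mul]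
    _ ≤ |x| ⬝ᵥ M *ᵥ |x| := dotProduct_mulVec_le_abs hnn x

theorem IsIrreducible.apply_ne_zero_of_mulVec_eq_smul (hM : M.IsHermitian)
    (hirr : M.IsIrreducible) (hμ : ∀ t ∈ spectrum ℝ M, t ≤ μ) {x : ι → ℝ}
    (hx : M *ᵥ x = μ • x) (hx0 : x ≠ 0) (i : ι) : x i ≠ 0 := by
  have hpos := hirr.pos_of_mulVec_eq_smul (mulVec_abs_eq_smul hM hirr.nonneg hμ hx)
    (abs_nonneg x) (fun h => hx0 (funext fun j => by simpa using congrFun h j)) i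
  rwa [Pi.abs_apply, abs_pos] at hpos

theorem IsHermitian.count_roots_charpoly (hM : M.IsHermitian) (μ : ℝ) :
    M.charpoly.roots.count μ = (Finset.univ.filter fun i => hM.eigenvalues i = μ).card := by
  rw [hM.roots_charpoly_eq_eigenvalues, Multiset.count_map, Finset.card_def, Finset.filter_val]
  simp [eq_comm]

theorem IsHermitian.card_filter_eigenvalues_eq_le_one (hM : M.IsHermitian) {i₀ : ι}
    (h : ∀ y, M *ᵥ y = μ • y → y i₀ = 0 → y = 0) :
    (Finset.univ.filter fun i => hM.eigenvalues i = μ).card ≤ 1 := by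
  rw [Finset.card_le_one]
  intro i hi j hj
  by_contra hij
  set b := hM.eigenvectorBasis
  have horth : ∀ k l, ⇑(b l) ⬝ᵥ ⇑(b k) = if k = l then 1 else 0 := fun k l => by
    simpa [EuclideanSpace.inner_eq_star_dotProduct] using
      orthonormal_iff_ite.1 b.orthonormal k l
  have heig : ∀ k, hM.eigenvalues k = μ → M *ᵥ ⇑(b k) = μ • ⇑(b k) := fun k hk =>
    hk ▸ hM.mulVec_eigenvectorBasis k
  have hbj : ⇑(b j) i₀ = 0 := by
    have hz := h (b j i₀ • ⇑(b i) - b i i₀ • ⇑(b j)) ?_ ?_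
    · simpa [horth, Ne.symm hij] using congrArg (⇑(b i) ⬝ᵥ ·) hz
    · rw [mulVec_sub, mulVec_smul, mulVec_smul, heig i (Finset.mem_filter.1 hi).2,
        heig j (Finset.mem_filter.1 hj).2, smul_sub, smul_comm μ, smul_comm μ]
    · simp [mul_comm]
  exact b.orthonormal.ne_zero j
    (WithLp.ofLp_injective 2 (h _ (heig j (Finset.mem_filter.1 hj).2) hbj))

theorem IsSymm.exists_perron_root [Nonempty ι] (hM : M.IsSymm) (hirr : M.IsIrreducible) :
    ∃ μ, μ ∈ M.charpoly.roots ∧ (∀ t ∈ M.charpoly.roots, t ≤ μ) ∧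
      M.charpoly.roots.count μ = 1 ∧ ∃ x : ι → ℝ, (∀ i, 0 < x i) ∧ M *ᵥ x = μ • x := by
  have hH : M.IsHermitian := isHermitian_iff_isSymm.2 hM
  have hroots (t : ℝ) : t ∈ M.charpoly.roots ↔ ∃ i, hH.eigenvalues i = t := by
    simp [hH.roots_charpoly_eq_eigenvalues]
  obtain ⟨i₀, -, hi₀⟩ := Finset.univ.exists_max_image hH.eigenvalues Finset.univ_nonempty
  set μ := hH.eigenvalues i₀
  have hμ : ∀ t ∈ spectrum ℝ M, t ≤ μ := by
    rw [hH.spectrum_real_eq_range_eigenvalues]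
    rintro _ ⟨i, rfl⟩
    exact hi₀ i (Finset.mem_univ i)
  set b : ι → ℝ := ⇑(hH.eigenvectorBasis i₀)
  have hb : M *ᵥ b = μ • b := hH.mulVec_eigenvectorBasis i₀
  have hb0 : b ≠ 0 := fun h =>
    hH.eigenvectorBasis.orthonormal.ne_zero i₀ (WithLp.ofLp_injective 2 h)
  refine ⟨μ, (hroots μ).2 ⟨i₀, rfl⟩, ?_, ?_, |b|, ?_, mulVec_abs_eq_smul hH hirr.nonneg hμ hb⟩
  · intro t ht
    obtain ⟨i, rfl⟩ := (hroots t).1 ht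
    exact hi₀ i (Finset.mem_univ i)
  · rw [hH.count_roots_charpoly]
    refine le_antisymm (hH.card_filter_eigenvalues_eq_le_one (i₀ := i₀) fun y hy hy0 => ?_)
      (Finset.card_pos.2 ⟨i₀, by simp [μ]⟩)
    by_contra hne
    exact hirr.apply_ne_zero_of_mulVec_eq_smul hH hμ hy hne i₀ hy0
  · exact fun i => abs_pos.2 (hirr.apply_ne_zero_of_mulVec_eq_smul hH hμ hb hb0 i)

end Symmetric

end Matrix

theorem stmt5_general {n m : ℕ} (hm : 1 ≤ m)
    (A : Matrix (Fin n) (Fin n) ℝ) (hA : A.IsSymm)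
    (hAnonneg : ∀ u v, 0 ≤ A u v)
    (hirr : ∀ u v : Fin n, ∃ r : ℕ, 0 < r ∧ 0 < (A ^ r) u v)
    (Q : Matrix (Fin n) (Fin m) ℝ) (hQnonneg : ∀ v c, 0 ≤ Q v c)
    (hQ : Qᵀ * Q = 1)
    (hAQ : A * Q = Q * (Qᵀ * A * Q)) :
    ∃ μ : ℝ,
      μ ∈ A.charpoly.roots ∧ (∀ x ∈ A.charpoly.roots, x ≤ μ) ∧
      μ ∈ (Qᵀ * A * Q).charpoly.roots ∧ (∀ x ∈ (Qᵀ * A * Q).charpoly.roots, x ≤ μ) ∧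
      A.charpoly.roots.count μ = 1 ∧ (Qᵀ * A * Q).charpoly.roots.count μ = 1 := by
  have hAirr : A.IsIrreducible := (isIrreducible_iff_exists_pow_pos hAnonneg).2 hirr
  have hB : (Qᵀ * A * Q).IsSymm := hA.transpose_mul_mul Q
  set c₀ : Fin m := ⟨0, hm⟩
  obtain ⟨v₀, hv₀⟩ := exists_apply_pos_of_transpose_mul_self_eq_one hQnonneg hQ c₀
  have : Nonempty (Fin m) := ⟨c₀⟩
  have : Nonempty (Fin n) := ⟨v₀⟩
  obtain ⟨μ, hμ, hμmax, hμcount, x, hxpos, hx⟩ := hA.exists_perron_root hAirr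
  obtain ⟨ν, hν, hνmax, hνcount, w, hwpos, hw⟩ :=
    hB.exists_perron_root (hAirr.transpose_mul_mul_of_mul_eq_mul hQnonneg hQ hAQ)
  have hQw : Q *ᵥ w ≠ 0 := fun h => (hwpos c₀).ne' <| by
    rw [← one_mulVec w, ← hQ, ← mulVec_mulVec, h, mulVec_zero, Pi.zero_apply]
  have hQtx : Qᵀ *ᵥ x ≠ 0 := fun h => (congrFun h c₀).not_gt <|
    Finset.sum_pos' (fun v _ => mul_nonneg (hQnonneg v c₀) (hxpos v).le)
      ⟨v₀, Finset.mem_univ v₀, mul_pos hv₀ (hxpos v₀)⟩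
  have hBQ : (Qᵀ * A * Q) * Qᵀ = Qᵀ * A := by
    simpa [transpose_mul, hA.eq, hB.eq] using (congrArg transpose hAQ).symm
  have hνμ : ν ≤ μ := hμmax ν <|
    mem_roots_charpoly_of_mulVec_eq_smul hQw (mulVec_mulVec_eq_smul_of_mul_eq_mul hAQ hw)
  have hμν : μ ≤ ν := hνmax μ <|
    mem_roots_charpoly_of_mulVec_eq_smul hQtx (mulVec_mulVec_eq_smul_of_mul_eq_mul hBQ hx)
  obtain rfl := le_antisymm hνμ hμν
  exact ⟨ν, hμ, hμmax, hν, hνmax, hμcount, hνcount⟩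

/-- if `A` is a nonnegative irreducible real symmetric `n × n` matrix, `Q` is a
nonnegative `n × m` matrix (`m ≥ 1`) with `Qᵀ Q = I_m`, nonzero rows, and `A Q = Q B` where
`B = Qᵀ A Q`, then the largest eigenvalue of `A` equals the largest eigenvalue of `B`, and it
is a simple root of the characteristic polynomial of `A` and of that of `B`. -/
theorem stmt5 {n m : ℕ} (hn : 1 ≤ n) (hm : 1 ≤ m)
    (A : Matrix (Fin n) (Fin n) ℝ) (hA : A.IsSymm)
    (hAnonneg : ∀ u v, 0 ≤ A u v)
    (hirr : ∀ u v : Fin n, ∃ r : ℕ, 0 < r ∧ 0 < (A ^ r) u v)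
    (Q : Matrix (Fin n) (Fin m) ℝ) (hQnonneg : ∀ v c, 0 ≤ Q v c)
    (hQ : Qᵀ * Q = 1) (hrows : ∀ v : Fin n, ∃ c : Fin m, Q v c ≠ 0)
    (hAQ : A * Q = Q * (Qᵀ * A * Q)) :
    ∃ μ : ℝ,
      μ ∈ A.charpoly.roots ∧ (∀ x ∈ A.charpoly.roots, x ≤ μ) ∧
      μ ∈ (Qᵀ * A * Q).charpoly.roots ∧ (∀ x ∈ (Qᵀ * A * Q).charpoly.roots, x ≤ μ) ∧
      A.charpoly.roots.count μ = 1 ∧ (Qᵀ * A * Q).charpoly.roots.count μ = 1 :=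
  stmt5_general hm A hA hAnonneg hirr Q hQnonneg hQ hAQ
end

section
/- Let A be an n×n real symmetric matrix regarded as a complex matrix, let τ ∈ ℝ, let u ≠ v be indices, and let γ ∈ ℂ with |γ| = 1. If exp(−i τ A) applied to the standard basis vector e_u equals γ · e_v, then exp(−i τ A) applied to e_v equals γ · e_u, and consequently exp(−i (2τ) A) applied to e_u equals γ² · e_u. -/
/-!
`U = exp(-iτA)` is unitary because `-iτA` is skew-Hermitian, and symmetric because `A` is.
For a real vector `y`, symmetry gives `Uᴴ y = conj (U y)`; applying `Uᴴ = U⁻¹` to `U e_u = γ e_v`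
therefore yields `conj γ · U e_v = e_u`, i.e. `U e_v = γ e_u`. Running the walk twice then sends
`e_u` to `γ e_v` and back to `γ² e_u`.
-/

open Matrix

namespace Matrix

theorem exp_mem_unitaryGroup_of_mem_skewAdjoint {m 𝔸 : Type*} [Fintype m] [DecidableEq m]
    [NormedCommRing 𝔸] [NormedAlgebra ℚ 𝔸] [CompleteSpace 𝔸] [StarRing 𝔸] [ContinuousStar 𝔸]
    {M : Matrix m m 𝔸} (hM : M ∈ skewAdjoint (Matrix m m 𝔸)) :
    NormedSpace.exp M ∈ unitaryGroup m 𝔸 := by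
  rw [mem_unitaryGroup_iff', star_eq_conjTranspose, ← exp_conjTranspose, ← star_eq_conjTranspose,
    skewAdjoint.mem_iff.mp hM, ← exp_add_of_commute _ _ (Commute.refl M).neg_left, neg_add_cancel,
    NormedSpace.exp_zero]

theorem neg_I_mul_smul_map_ofReal_mem_skewAdjoint {m : Type*} {A : Matrix m m ℝ} (hA : A.IsSymm)
    (t : ℝ) : (-(Complex.I * t)) • A.map Complex.ofReal ∈ skewAdjoint (Matrix m m ℂ) := by
  refine IsSelfAdjoint.smul_mem_skewAdjoint ?_ ?_
  · rw [skewAdjoint.mem_iff]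
    simp
  · exact (isHermitian_iff_isSymm.mpr hA).map _ fun x => (Complex.conj_ofReal x).symm

section Symmetric

variable {m R : Type*} [Fintype m] [CommRing R] [StarRing R]

theorem conjTranspose_mulVec_of_isSymm {U : Matrix m m R} (hU : U.IsSymm) {y : m → R}
    (hy : star y = y) : Uᴴ *ᵥ y = star (U *ᵥ y) := by
  rw [star_mulVec, hy, ← mulVec_transpose, hU.conjTranspose.eq]

theorem mulVec_eq_smul_swap_of_isSymm [DecidableEq m] {U : Matrix m m R}
    (hU : U ∈ unitaryGroup m R) (hUs : U.IsSymm) {x y : m → R} (hx : star x = x)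
    (hy : star y = y) {γ : R} (hγ : γ ∈ unitary R) (h : U *ᵥ x = γ • y) : U *ᵥ y = γ • x := by
  have hback : γ • star (U *ᵥ y) = x := by
    rw [← conjTranspose_mulVec_of_isSymm hUs hy, ← mulVec_smul, ← h, mulVec_mulVec,
      ← star_eq_conjTranspose, mem_unitaryGroup_iff'.mp hU, one_mulVec]
  have hconj : star γ • U *ᵥ y = x := by
    simpa only [star_smul, star_star, hx] using congrArg star hback
  rw [← hconj, smul_smul, Unitary.mul_star_self_of_mem hγ, one_smul]

end Symmetric

end Matrix

theorem stmt8_general {n : ℕ} (A : Matrix (Fin n) (Fin n) ℝ) (hA : A.IsSymm)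
    (τ : ℝ) (u v : Fin n) (γ : ℂ) (hγ : ‖γ‖ = 1)
    (hPST : (NormedSpace.exp ((-(Complex.I * (τ : ℂ))) • A.map Complex.ofReal)).mulVec
        (Pi.single u 1 : Fin n → ℂ) = γ • (Pi.single v 1 : Fin n → ℂ)) :
    (NormedSpace.exp ((-(Complex.I * (τ : ℂ))) • A.map Complex.ofReal)).mulVec
        (Pi.single v 1 : Fin n → ℂ) = γ • (Pi.single u 1 : Fin n → ℂ) ∧
      (NormedSpace.exp ((-(Complex.I * ((2 * τ : ℝ) : ℂ))) • A.map Complex.ofReal)).mulVec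
        (Pi.single u 1 : Fin n → ℂ) = γ ^ 2 • (Pi.single u 1 : Fin n → ℂ) := by
  set M := (-(Complex.I * (τ : ℂ))) • A.map Complex.ofReal
  have hU :=
    exp_mem_unitaryGroup_of_mem_skewAdjoint (neg_I_mul_smul_map_ofReal_mem_skewAdjoint hA τ)
  have hUs : (NormedSpace.exp M).IsSymm := ((hA.map _).smul _).exp
  have hγu : γ ∈ unitary ℂ := by
    rw [Unitary.mem_iff_star_mul_self, Complex.star_def, Complex.conj_mul', hγ]
    norm_num
  have hreal (w : Fin n) : star (Pi.single w 1 : Fin n → ℂ) = Pi.single w 1 := by simp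
  have hvu := mulVec_eq_smul_swap_of_isSymm hU hUs (hreal u) (hreal v) hγu hPST
  have hdouble : (-(Complex.I * ((2 * τ : ℝ) : ℂ))) • A.map Complex.ofReal = (2 : ℕ) • M := by
    rw [two_nsmul, ← add_smul]
    push_cast
    ring_nf
  refine ⟨hvu, ?_⟩
  rw [hdouble, exp_nsmul, sq, ← mulVec_mulVec, hPST, mulVec_smul, hvu, smul_smul, sq]

/-- if the quantum walk `exp(-iτA)` generated by a real symmetric matrix `A`
maps `e_u` to `γ e_v` (perfect state transfer from `u` to `v` at time `τ`, with `|γ| = 1`),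
then it maps `e_v` to `γ e_u`, and `exp(-i(2τ)A)` maps `e_u` to `γ² e_u`. -/
theorem stmt8 {n : ℕ} (A : Matrix (Fin n) (Fin n) ℝ) (hA : A.IsSymm)
    (τ : ℝ) (u v : Fin n) (huv : u ≠ v) (γ : ℂ) (hγ : ‖γ‖ = 1)
    (hPST : (NormedSpace.exp ((-(Complex.I * (τ : ℂ))) • A.map Complex.ofReal)).mulVec
        (Pi.single u 1 : Fin n → ℂ) = γ • (Pi.single v 1 : Fin n → ℂ)) :
    (NormedSpace.exp ((-(Complex.I * (τ : ℂ))) • A.map Complex.ofReal)).mulVec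
        (Pi.single v 1 : Fin n → ℂ) = γ • (Pi.single u 1 : Fin n → ℂ) ∧
      (NormedSpace.exp ((-(Complex.I * ((2 * τ : ℝ) : ℂ))) • A.map Complex.ofReal)).mulVec
        (Pi.single u 1 : Fin n → ℂ) = γ ^ 2 • (Pi.single u 1 : Fin n → ℂ) :=
  stmt8_general A hA τ u v γ hγ hPST
end

section
/- Let λ : Fin n → ℝ be such that for all indices i, j, a, b with λ(a) ≠ λ(b) there exists a rational number q with λ(i) − λ(j) = q · (λ(a) − λ(b)). Then for every positive integer k and all subsets S, T, P, R of Fin n each of cardinality k with Σ_{i ∈ P} λ(i) ≠ Σ_{i ∈ R} λ(i), there exists a rational number q with Σ_{i ∈ S} λ(i) − Σ_{i ∈ T} λ(i) = q · (Σ_{i ∈ P} λ(i) − Σ_{i ∈ R} λ(i)). -/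
/-- the ratio condition on a family of eigenvalues `λ` is inherited by sums of
`k` distinct eigenvalues (the `k`-fermion spectrum). -/
theorem stmt9 {n : ℕ} (lam : Fin n → ℝ)
    (h : ∀ i j a b : Fin n, lam a ≠ lam b →
      ∃ q : ℚ, lam i - lam j = (q : ℝ) * (lam a - lam b)) :
    ∀ k : ℕ, 0 < k → ∀ S T P R : Finset (Fin n),
      S.card = k → T.card = k → P.card = k → R.card = k →
      (∑ i ∈ P, lam i) ≠ (∑ i ∈ R, lam i) →
      ∃ q : ℚ, (∑ i ∈ S, lam i) - (∑ i ∈ T, lam i) =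
        (q : ℝ) * ((∑ i ∈ P, lam i) - (∑ i ∈ R, lam i)) := by
  intro k hk S T P R hS hT hP hR hne
  by_cases hc : ∃ a b : Fin n, lam a ≠ lam b
  · obtain ⟨a, b, hab⟩ := hc
    set d : ℝ := lam a - lam b with hd
    have hd0 : d ≠ 0 := sub_ne_zero.mpr hab
    choose qf hqf using fun i => h i b a b hab
    have key : ∀ U : Finset (Fin n),
        (∑ i ∈ U, lam i) = U.card * lam b + (↑(∑ i ∈ U, qf i)) * d := by
      intro U
      push_cast
      rw [Finset.sum_mul]
      have : ∀ i ∈ U, lam i = lam b + (qf i : ℝ) * d := by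
        intro i _
        have := hqf i
        rw [hd]
        linarith
      rw [Finset.sum_congr rfl this, Finset.sum_add_distrib,
        Finset.sum_const, nsmul_eq_mul]
    have hPR : (∑ i ∈ P, lam i) - (∑ i ∈ R, lam i)
        = (↑(∑ i ∈ P, qf i - ∑ i ∈ R, qf i)) * d := by
      rw [key P, key R, hP, hR]; push_cast; ring
    have hST : (∑ i ∈ S, lam i) - (∑ i ∈ T, lam i)
        = (↑(∑ i ∈ S, qf i - ∑ i ∈ T, qf i)) * d := by
      rw [key S, key T, hS, hT]; push_cast; ring
    set cP : ℚ := ∑ i ∈ P, qf i - ∑ i ∈ R, qf i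
    set cS : ℚ := ∑ i ∈ S, qf i - ∑ i ∈ T, qf i
    have hcP : cP ≠ 0 := by
      intro h0
      apply hne
      have := hPR
      rw [h0] at this
      push_cast at this
      linarith
    refine ⟨cS / cP, ?_⟩
    rw [hST, hPR]
    push_cast
    field_simp
  · push_neg at hc
    exfalso
    apply hne
    have hn : 0 < n := by
      rcases Finset.card_pos.mp (hP ▸ hk) with ⟨i, _⟩
      exact i.pos
    have hb : ∀ U : Finset (Fin n), (∑ i ∈ U, lam i) = U.card * lam ⟨0, hn⟩ := by
      intro U
      rw [Finset.sum_congr rfl (fun i _ => hc i ⟨0, hn⟩), Finset.sum_const, nsmul_eq_mul]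
    rw [hb P, hb R, hP, hR]
end

section
/- For n ≥ 1, let K_n be the n×n real symmetric matrix indexed by {0,…,n−1} with (K_n)(i, i+1) = (K_n)(i+1, i) = √((i+1)(n−1−i)) for 0 ≤ i ≤ n−2 and all other entries 0. Then the characteristic polynomial of K_n equals ∏_{j=0}^{n−1} (X − (2j − (n−1))); equivalently, the eigenvalues of K_n are exactly −(n−1), −(n−3), …, n−3, n−1, each simple. -/
/-! Conjugating `K_n` by the diagonal matrix `diag(√C(n-1, i))` gives the Sylvester–Kac matrix
with superdiagonal `1, 2, …, n-1` and subdiagonal `n-1, …, 2, 1`. Read on coefficient vectors of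
polynomials of degree `< n`, that matrix is the operator `p ↦ (1 - X²) p' + (n - 1) X p`, whose
eigenvectors are `(1 - X)^a (1 + X)^b` with `a + b = n - 1`, for the eigenvalues `b - a`. These are
the `n` distinct numbers `2j - (n - 1)`, so they exhaust the characteristic polynomial. -/

open Matrix Polynomial

/-- The Kac matrix: adjacency matrix of the hypercubically weighted path graph `P̃_n`,
with `K(i, i+1) = K(i+1, i) = √((i+1)(n−1−i))` (0-based indices) and all other entries 0. -/
noncomputable def kacMatrix (n : ℕ) : Matrix (Fin n) (Fin n) ℝ :=
  Matrix.of fun i j =>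
    if (i : ℕ) + 1 = (j : ℕ) then
      Real.sqrt ((((i : ℕ) : ℝ) + 1) * ((n : ℝ) - 1 - ((i : ℕ) : ℝ)))
    else if (j : ℕ) + 1 = (i : ℕ) then
      Real.sqrt ((((j : ℕ) : ℝ) + 1) * ((n : ℝ) - 1 - ((j : ℕ) : ℝ)))
    else 0

theorem Matrix.charpoly_eq_prod_X_sub_C_of_hasEigenvectors {K ι : Type*} [Field K] [Fintype ι]
    [DecidableEq ι] (M : Matrix ι ι K) (μ : ι → K) (hμ : Function.Injective μ)
    (hv : ∀ i, ∃ v ≠ 0, M *ᵥ v = μ i • v) :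
    M.charpoly = ∏ i, (X - C (μ i)) := by
  have hroot : ∀ i, M.charpoly.IsRoot (μ i) := fun i => by
    obtain ⟨v, hv0, hMv⟩ := hv i
    rw [IsRoot, eval_charpoly, ← exists_mulVec_eq_zero_iff]
    refine ⟨v, hv0, ?_⟩
    rw [sub_mulVec, hMv, scalar_apply, ← smul_one_eq_diagonal, smul_mulVec, one_mulVec, sub_self]
  have hdvd : ∏ i, (X - C (μ i)) ∣ M.charpoly :=
    Finset.prod_dvd_of_coprime ((pairwise_coprime_X_sub_C hμ).set_pairwise _)
      fun i _ => dvd_iff_isRoot.mpr (hroot i)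
  refine eq_of_monic_of_dvd_of_natDegree_le (monic_prod_of_monic _ _ fun i _ => monic_X_sub_C _)
    M.charpoly_monic hdvd ?_
  rw [charpoly_natDegree_eq_dim, natDegree_prod_of_monic _ _ fun i _ => monic_X_sub_C _]
  simp

theorem Matrix.charpoly_diagonal_inv_mul_mul_diagonal {K ι : Type*} [Field K] [Fintype ι]
    [DecidableEq ι] {d : ι → K} (hd : ∀ i, d i ≠ 0) (M : Matrix ι ι K) :
    (diagonal d⁻¹ * M * diagonal d).charpoly = M.charpoly := by
  rw [charpoly_mul_comm, ← mul_assoc, diagonal_mul_diagonal]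
  simp [hd]

theorem Polynomial.mul_derivative_pow {R : Type*} [CommRing R] (p : R[X]) (a : ℕ) :
    p * derivative (p ^ a) = C (a : R) * p ^ a * derivative p := by
  rcases a with _ | a
  · simp
  · rw [derivative_pow_succ, pow_succ]
    push_cast
    ring

theorem Polynomial.coeff_X_mul_derivative {R : Type*} [Semiring R] (p : R[X]) (k : ℕ) :
    (X * derivative p).coeff k = k * p.coeff k := by
  rcases k with _ | k
  · simp
  · rw [coeff_X_mul, coeff_derivative, ← Nat.cast_succ, Nat.cast_comm]

theorem one_sub_X_sq_mul_derivative_one_sub_X_pow_mul_one_add_X_pow {R : Type*} [CommRing R]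
    (a b : ℕ) :
    (1 - X ^ 2) * derivative ((1 - X) ^ a * (1 + X) ^ b : R[X])
      + C ((a + b : ℕ) : R) * X * ((1 - X) ^ a * (1 + X) ^ b)
      = C ((b : R) - a) * ((1 - X) ^ a * (1 + X) ^ b) := by
  have ha := mul_derivative_pow (1 - X : R[X]) a
  have hb := mul_derivative_pow (1 + X : R[X]) b
  simp only [derivative_sub, derivative_add, derivative_one, derivative_X] at ha hb
  rw [derivative_mul]
  simp only [Nat.cast_add, C_add, C_sub]
  linear_combination (1 + X : R[X]) ^ b * (1 + X) * ha + (1 - X : R[X]) ^ a * (1 - X) * hb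

theorem Nat.cast_choose_succ_mul {K : Type*} [Ring K] {N m : ℕ} (h : m ≤ N) :
    (N.choose (m + 1) : K) * (m + 1) = N.choose m * (N - m) := by
  have := congrArg (Nat.cast : ℕ → K) (Nat.choose_succ_right_eq N m)
  push_cast [Nat.cast_sub h] at this
  exact this

theorem Real.sqrt_mul_sqrt_choose (N m : ℕ) :
    √((m + 1) * (N - m)) * √(N.choose m) = (m + 1) * √(N.choose (m + 1)) := by
  rcases le_or_gt m N with h | h
  · rw [← Real.sqrt_mul' _ (Nat.cast_nonneg _), ← Real.sqrt_sq (by positivity : (0 : ℝ) ≤ m + 1),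
      ← Real.sqrt_mul (sq_nonneg _), Real.sqrt_sq (by positivity)]
    congr 1
    linear_combination (m + 1 : ℝ) * (Nat.cast_choose_succ_mul (K := ℝ) h).symm
  · simp [Nat.choose_eq_zero_of_lt h, Nat.choose_eq_zero_of_lt (h.trans (Nat.lt_succ_self m))]

theorem Real.sqrt_mul_sqrt_choose_succ (N m : ℕ) :
    √((m + 1) * (N - m)) * √(N.choose (m + 1)) = (N - m) * √(N.choose m) := by
  rcases le_or_gt m N with h | h
  · have hNm : (0 : ℝ) ≤ N - m := sub_nonneg.mpr (by exact_mod_cast h)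
    rw [← Real.sqrt_mul' _ (Nat.cast_nonneg _), ← Real.sqrt_sq hNm,
      ← Real.sqrt_mul (sq_nonneg _), Real.sqrt_sq hNm]
    congr 1
    linear_combination ((N : ℝ) - m) * Nat.cast_choose_succ_mul (K := ℝ) h
  · simp [Nat.choose_eq_zero_of_lt h, Nat.choose_eq_zero_of_lt (h.trans (Nat.lt_succ_self m))]

theorem Real.sqrt_choose_pred_ne_zero {n : ℕ} (i : Fin n) : √((n - 1).choose i : ℝ) ≠ 0 :=
  (Real.sqrt_pos.mpr (by exact_mod_cast Nat.choose_pos (by omega))).ne'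

def sylvesterKacMatrix (R : Type*) [Ring R] (n : ℕ) : Matrix (Fin n) (Fin n) R :=
  of fun i j => if (i : ℕ) + 1 = j then (j : R) else if (j : ℕ) + 1 = i then (n : R) - i else 0

theorem sylvesterKacMatrix_mulVec_coeff {R : Type*} [CommRing R] {n : ℕ} (p : R[X])
    (hp : p.natDegree < n) :
    sylvesterKacMatrix R n *ᵥ (fun k => p.coeff k)
      = fun k => ((1 - X ^ 2) * derivative p + C ((n : R) - 1) * X * p).coeff k := by
  ext ⟨i, hi⟩
  have hsplit : ∀ k : ℕ, (if i + 1 = k then (k : R) else if k + 1 = i then (n : R) - i else 0)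
      * p.coeff k = (if i + 1 = k then (i + 1 : R) * p.coeff (i + 1) else 0)
        + (if k + 1 = i then ((n : R) - 1 - k) * p.coeff k else 0) := by
    intro k
    split_ifs <;> first | omega | (subst_vars; push_cast; ring)
  have hop : (1 - X ^ 2) * derivative p + C ((n : R) - 1) * X * p
      = derivative p + X * (C ((n : R) - 1) * p - X * derivative p) := by ring
  have htop : (if i + 1 < n then (i + 1 : R) * p.coeff (i + 1) else 0)
      = (i + 1 : R) * p.coeff (i + 1) := by
    split_ifs
    · rfl
    · rw [coeff_eq_zero_of_natDegree_lt (by omega), mul_zero]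
  simp only [mulVec, dotProduct, sylvesterKacMatrix, of_apply]
  rw [Fin.sum_univ_eq_sum_range (fun k => (if i + 1 = k then (k : R)
    else if k + 1 = i then (n : R) - i else 0) * p.coeff k) n]
  simp only [hsplit, Finset.sum_add_distrib, Finset.sum_ite_eq, Finset.mem_range, hop,
    coeff_add, coeff_derivative, htop]
  rcases i with _ | m
  · simp
  · simp only [Nat.add_right_cancel_iff, Finset.sum_ite_eq', Finset.mem_range,
      if_pos (by omega : m < n), coeff_X_mul, coeff_sub, coeff_C_mul, coeff_X_mul_derivative]
    push_cast
    ring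

theorem sylvesterKacMatrix_exists_eigenvector {R : Type*} [CommRing R] [Nontrivial R]
    {a b n : ℕ} (h : a + b + 1 = n) :
    ∃ v ≠ 0, sylvesterKacMatrix R n *ᵥ v = ((b : R) - a) • v := by
  set p : R[X] := (1 - X) ^ a * (1 + X) ^ b
  have hdeg : p.natDegree < n := by
    subst h
    refine Nat.lt_succ_of_le ?_
    simp only [p]
    compute_degree
  refine ⟨fun k => p.coeff k, fun h0 => ?_, ?_⟩
  · have := congrFun h0 ⟨0, by omega⟩
    simp [p, coeff_zero_eq_eval_zero] at this
  · rw [sylvesterKacMatrix_mulVec_coeff p hdeg, ← h, Nat.cast_add_one, add_sub_cancel_right,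
      one_sub_X_sq_mul_derivative_one_sub_X_pow_mul_one_add_X_pow]
    ext k
    rw [Pi.smul_apply, coeff_C_mul, smul_eq_mul]

theorem kacMatrix_eq_diagonal_conj (n : ℕ) :
    kacMatrix n = diagonal (fun i : Fin n => √((n - 1).choose i))⁻¹
      * sylvesterKacMatrix ℝ n * diagonal (fun i : Fin n => √((n - 1).choose i)) := by
  ext i j
  rw [mul_diagonal, diagonal_mul, Pi.inv_apply, mul_assoc,
    eq_inv_mul_iff_mul_eq₀ (Real.sqrt_choose_pred_ne_zero i)]
  obtain ⟨N, rfl⟩ : ∃ N, n = N + 1 := ⟨n - 1, by have := i.pos; omega⟩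
  simp only [kacMatrix, sylvesterKacMatrix, of_apply, Nat.add_sub_cancel, Nat.cast_add,
    Nat.cast_one, add_sub_cancel_right]
  split_ifs with h₁ h₂
  · rw [← h₁, mul_comm, Real.sqrt_mul_sqrt_choose]
    push_cast
    ring
  · rw [← h₂, mul_comm, Real.sqrt_mul_sqrt_choose_succ]
    push_cast
    ring
  · simp

theorem stmt10_general (n : ℕ) :
    (kacMatrix n).charpoly =
      ∏ j : Fin n, (X - C (2 * ((j : ℕ) : ℝ) - ((n : ℝ) - 1))) := by
  rw [kacMatrix_eq_diagonal_conj,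
    charpoly_diagonal_inv_mul_mul_diagonal Real.sqrt_choose_pred_ne_zero]
  refine charpoly_eq_prod_X_sub_C_of_hasEigenvectors _ _ (fun i j hij => ?_) fun j => ?_
  · exact Fin.ext (by simpa using hij)
  · obtain ⟨v, hv, hSv⟩ :=
      sylvesterKacMatrix_exists_eigenvector (R := ℝ) (a := n - 1 - j) (b := j) (n := n)
        (by omega)
    refine ⟨v, hv, hSv.trans (congrArg (· • v) ?_)⟩
    rw [Nat.cast_sub (by omega : (j : ℕ) ≤ n - 1), Nat.cast_sub j.pos, Nat.cast_one]
    ring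

/-- the characteristic polynomial of the Kac matrix `K_n` is
`∏_{j=0}^{n−1} (X − (2j − (n−1)))`; its eigenvalues are `−(n−1), −(n−3), …, n−1`, all simple. -/
theorem stmt10 (n : ℕ) (hn : 1 ≤ n) :
    (kacMatrix n).charpoly =
      ∏ j : Fin n, (X - C (2 * ((j : ℕ) : ℝ) - ((n : ℝ) - 1))) :=
  stmt10_general n
end

section
/- For n ≥ 1, let K_n be the n×n real symmetric matrix indexed by {0,…,n−1} with (K_n)(i, i+1) = (K_n)(i+1, i) = √((i+1)(n−1−i)) for 0 ≤ i ≤ n−2 and all other entries 0, regarded as a complex matrix. Then exp(−i (π/2) K_n) = (−i)^{n−1} · R_n, where R_n is the n×n reversal permutation matrix with R_n(a, b) = 1 if a + b = n − 1 and R_n(a, b) = 0 otherwise. In particular, for every vertex u, exp(−i(π/2) K_n) maps the standard basis vector e_u to (−i)^{n−1} e_{n−1−u}. -/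
open Matrix

/-- The reversal permutation matrix `R_n`, with `R(a,b) = 1` iff `a + b = n − 1`. -/
def revMatrix (n : ℕ) : Matrix (Fin n) (Fin n) ℂ :=
  Matrix.of fun a b => if (a : ℕ) + (b : ℕ) = n - 1 then 1 else 0

/-! The weighted path `P̃_{m+1}` is the quotient of the hypercube `Q_m` by Hamming weight. Let
`V` be the matrix whose column `u` is the normalised indicator of the `u`-th layer of `Q_m`, and
`A = ∑ₖ Fₖ` the adjacency matrix of `Q_m`, where `Fₖ` is the permutation matrix flipping
coordinate `k`. Then `A V = V K` and `Vᵀ V = 1`. The `Fₖ` are commuting involutions, and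
`exp(-i π/2 F) = -i F` for any involution `F`, so `exp(-i π/2 A) = (-i)^m F_univ`. Complementation
sends layer `w` to layer `m - w`, i.e. `F_univ V = V R`, hence
`exp(-i π/2 K) = Vᵀ exp(-i π/2 A) V = (-i)^m R`. -/

open NormedSpace
open scoped symmDiff

section Involution

variable {A : Type*} [Ring A] [Algebra ℂ A] [TopologicalSpace A] [IsTopologicalRing A]
  [ContinuousSMul ℂ A] [T2Space A]

theorem exp_smul_of_mul_self_eq_one {X : A} (hX : X * X = 1) (a : ℂ) :
    exp (a • X) = Complex.cosh a • (1 : A) + Complex.sinh a • X := by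
  have hsq : X ^ 2 = 1 := by rw [sq, hX]
  rw [exp_eq_tsum ℂ]
  refine (HasSum.even_add_odd ?_ ?_).tsum_eq
  · convert (Complex.hasSum_cosh a).smul_const (1 : A) using 2 with k
    rw [smul_pow, smul_smul, pow_mul X, hsq, one_pow, div_eq_inv_mul]
  · convert (Complex.hasSum_sinh a).smul_const X using 2 with k
    rw [smul_pow, smul_smul, pow_succ X, pow_mul X, hsq, one_pow, one_mul, div_eq_inv_mul]

theorem exp_neg_I_pi_div_two_smul_of_mul_self_eq_one {X : A} (hX : X * X = 1) :
    exp ((-(Complex.I * ((Real.pi : ℂ) / 2))) • X) = (-Complex.I) • X := by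
  rw [exp_smul_of_mul_self_eq_one hX, Complex.cosh_neg, Complex.sinh_neg, mul_comm,
    Complex.cosh_mul_I, Complex.sinh_mul_I, Complex.cos_pi_div_two, Complex.sin_pi_div_two]
  simp

end Involution

theorem Matrix.exp_mul_eq_mul_exp_of_mul_eq {m n 𝕂 : Type*} [Fintype m] [DecidableEq m]
    [Fintype n] [DecidableEq n] [RCLike 𝕂] {M : Matrix m m 𝕂} {K : Matrix n n 𝕂}
    {V : Matrix m n 𝕂} (h : M * V = V * K) :
    exp M * V = V * exp K := by
  have hpow : ∀ k : ℕ, M ^ k * V = V * K ^ k := by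
    intro k
    induction k with
    | zero => simp
    | succ k ih =>
      rw [pow_succ, pow_succ, Matrix.mul_assoc, h, ← Matrix.mul_assoc, ih, Matrix.mul_assoc]
  open scoped Norms.Operator in
  have hM := (exp_series_hasSum_exp' (𝕂 := 𝕂) M).mapL
    (mulRightLinearMap m 𝕂 V).toContinuousLinearMap
  open scoped Norms.Operator in
  have hK := (exp_series_hasSum_exp' (𝕂 := 𝕂) K).mapL
    (mulLeftLinearMap n 𝕂 V).toContinuousLinearMap
  simp only [ContinuousLinearMap.map_smul, LinearMap.coe_toContinuousLinearMap',
    mulRightLinearMap_apply, mulLeftLinearMap_apply, hpow] at hM hK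
  exact hM.unique hK

theorem Finset.symmDiff_singleton_of_mem {α : Type*} [DecidableEq α] {S : Finset α} {k : α}
    (h : k ∈ S) :
    S ∆ {k} = S.erase k := by
  ext x; by_cases hx : x = k <;> simp_all [Finset.mem_symmDiff]

theorem Finset.symmDiff_singleton_of_notMem {α : Type*} [DecidableEq α] {S : Finset α} {k : α}
    (h : k ∉ S) :
    S ∆ {k} = insert k S := by
  ext x; by_cases hx : x = k <;> simp_all [Finset.mem_symmDiff]

section Hypercube

variable {α R : Type*} [Fintype α] [DecidableEq α] [Semiring R]

variable (R) in
def flipMatrix (I : Finset α) : Matrix (Finset α) (Finset α) R :=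
  Matrix.of fun S T => if T = S ∆ I then 1 else 0

theorem flipMatrix_mul_apply {n : Type*} (I : Finset α) (W : Matrix (Finset α) n R)
    (S : Finset α) (u : n) : (flipMatrix R I * W) S u = W (S ∆ I) u := by
  simp [flipMatrix, Matrix.mul_apply]

theorem flipMatrix_mul_flipMatrix (I J : Finset α) :
    flipMatrix R I * flipMatrix R J = flipMatrix R (I ∆ J) := by
  ext S T
  rw [flipMatrix_mul_apply]
  simp [flipMatrix, symmDiff_assoc]

theorem flipMatrix_empty : flipMatrix R (∅ : Finset α) = 1 := by
  ext S T
  simp [flipMatrix, Matrix.one_apply, ← Finset.bot_eq_empty, eq_comm]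

theorem flipMatrix_mul_self (I : Finset α) : flipMatrix R I * flipMatrix R I = 1 := by
  rw [flipMatrix_mul_flipMatrix, symmDiff_self, Finset.bot_eq_empty, flipMatrix_empty]

theorem flipMatrix_commute (I J : Finset α) : Commute (flipMatrix R I) (flipMatrix R J) := by
  rw [Commute, SemiconjBy, flipMatrix_mul_flipMatrix, flipMatrix_mul_flipMatrix, symmDiff_comm]

theorem sum_flipMatrix_singleton_mul_apply {n : Type*} (W : Matrix (Finset α) n R)
    (S : Finset α) (u : n) :
    ((∑ k : α, flipMatrix R {k}) * W) S u =
      ∑ k ∈ S, W (S.erase k) u + ∑ k ∈ Sᶜ, W (insert k S) u := by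
  rw [Matrix.sum_mul, Matrix.sum_apply, ← Finset.sum_add_sum_compl S]
  congr 1 <;> refine Finset.sum_congr rfl fun k hk => ?_ <;> rw [flipMatrix_mul_apply]
  · rw [Finset.symmDiff_singleton_of_mem hk]
  · rw [Finset.symmDiff_singleton_of_notMem (Finset.mem_compl.mp hk)]

theorem exp_smul_sum_flipMatrix_singleton (s : Finset α) :
    exp ((-(Complex.I * ((Real.pi : ℂ) / 2))) • ∑ k ∈ s, flipMatrix ℂ {k}) =
      (-Complex.I) ^ s.card • flipMatrix ℂ s := by
  induction s using Finset.induction_on with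
  | empty => simp [flipMatrix_empty]
  | insert a s ha ih =>
    have hcomm : Commute (flipMatrix ℂ {a}) (∑ k ∈ s, flipMatrix ℂ {k}) :=
      Commute.sum_right _ _ _ fun k _ => flipMatrix_commute _ _
    rw [Finset.sum_insert ha, smul_add, Matrix.exp_add_of_commute _ _
      ((hcomm.smul_left _).smul_right _), ih,
      exp_neg_I_pi_div_two_smul_of_mul_self_eq_one (flipMatrix_mul_self _),
      smul_mul_smul_comm, flipMatrix_mul_flipMatrix, ← pow_succ', Finset.card_insert_of_notMem ha,
      (Finset.disjoint_singleton_left.mpr ha).symmDiff_eq_sup, Finset.sup_eq_union,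
      ← Finset.insert_eq]

end Hypercube

theorem mul_inv_sqrt_eq_sqrt_mul_mul_inv_sqrt {a b p q : ℝ} (ha : 0 ≤ a) (hb : 0 ≤ b)
    (hp : 0 < p) (hq : 0 < q) (h : a * p = b * q) :
    a * (√q)⁻¹ = √(a * b) * (√p)⁻¹ := by
  rw [← div_eq_mul_inv, ← div_eq_mul_inv, div_eq_div_iff (by positivity) (by positivity)]
  conv_lhs => rw [← Real.sqrt_sq ha, ← Real.sqrt_mul (sq_nonneg a)]
  rw [← Real.sqrt_mul (mul_nonneg ha hb)]
  congr 1
  linear_combination a * h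

theorem cast_choose_succ_mul {m w : ℕ} (h : w < m) :
    (m.choose (w + 1) : ℝ) * (w + 1) = m.choose w * (m - w) := by
  have := Nat.choose_succ_right_eq m w
  rw [← Nat.cast_inj (R := ℝ)] at this
  push_cast [Nat.cast_sub h.le] at this
  exact this

theorem sub_mul_inv_sqrt_choose_succ {m w : ℕ} (h : w < m) :
    ((m : ℝ) - w) * (√(m.choose (w + 1)))⁻¹ = √((w + 1) * (m - w)) * (√(m.choose w))⁻¹ := by
  have hw : (w : ℝ) < m := by exact_mod_cast h
  rw [mul_comm ((w : ℝ) + 1)]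
  refine mul_inv_sqrt_eq_sqrt_mul_mul_inv_sqrt (by linarith) (by positivity)
    (by exact_mod_cast Nat.choose_pos h.le) (by exact_mod_cast Nat.choose_pos h) ?_
  linarith [cast_choose_succ_mul h]

theorem succ_mul_inv_sqrt_choose {m w : ℕ} (h : w < m) :
    ((w : ℝ) + 1) * (√(m.choose w))⁻¹ = √((w + 1) * (m - w)) * (√(m.choose (w + 1)))⁻¹ := by
  have hw : (w : ℝ) < m := by exact_mod_cast h
  refine mul_inv_sqrt_eq_sqrt_mul_mul_inv_sqrt (by positivity) (by linarith)
    (by exact_mod_cast Nat.choose_pos h) (by exact_mod_cast Nat.choose_pos h.le) ?_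
  linarith [cast_choose_succ_mul h]

theorem kacMatrix_succ_apply (m : ℕ) (i j : Fin (m + 1)) :
    kacMatrix (m + 1) i j =
      if (i : ℕ) + 1 = j then √(((i : ℕ) + 1) * (m - (i : ℕ)))
      else if (j : ℕ) + 1 = i then √(((j : ℕ) + 1) * (m - (j : ℕ))) else 0 := by
  simp only [kacMatrix, Matrix.of_apply, Nat.cast_succ, add_sub_cancel_right]

noncomputable def layerMatrix (m : ℕ) : Matrix (Finset (Fin m)) (Fin (m + 1)) ℂ :=
  Matrix.of fun S u => if S.card = u then ((√(m.choose u))⁻¹ : ℝ) else 0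

theorem layerMatrix_transpose_mul_self (m : ℕ) : (layerMatrix m)ᵀ * layerMatrix m = 1 := by
  ext u v
  rw [Matrix.mul_apply, Matrix.one_apply]
  split_ifs with huv
  · subst huv
    have hpos : (0 : ℝ) < m.choose u := by exact_mod_cast Nat.choose_pos (Fin.is_le u)
    have hlayer : Finset.univ.filter (fun S : Finset (Fin m) => S.card = u) =
        Finset.powersetCard u Finset.univ := by
      ext; simp
    simp only [Matrix.transpose_apply, layerMatrix, Matrix.of_apply, ite_zero_mul_ite_zero,
      and_self]
    rw [← Finset.sum_filter, hlayer, Finset.sum_const, Finset.card_powersetCard, Finset.card_univ,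
      Fintype.card_fin, nsmul_eq_mul, ← Complex.ofReal_mul, ← mul_inv,
      Real.mul_self_sqrt hpos.le]
    push_cast
    exact mul_inv_cancel₀ (by exact_mod_cast hpos.ne')
  · refine Finset.sum_eq_zero fun S _ => ?_
    simp only [Matrix.transpose_apply, layerMatrix, Matrix.of_apply]
    split_ifs with h1 h2 <;> first | exact absurd (Fin.ext (h1.symm.trans h2)) huv | simp

theorem sum_flipMatrix_singleton_mul_layerMatrix (m : ℕ) :
    (∑ k : Fin m, flipMatrix ℂ {k}) * layerMatrix m =
      layerMatrix m * (kacMatrix (m + 1)).map Complex.ofReal := by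
  ext S u
  set c : ℕ → ℝ := fun u => (√(m.choose u))⁻¹ with hc
  obtain ⟨w, hwS⟩ : ∃ w, S.card = w := ⟨_, rfl⟩
  have hwm : w < m + 1 := by simpa [← hwS, Nat.lt_succ_iff] using Finset.card_le_univ S
  have hdown : ∑ k ∈ S, layerMatrix m (S.erase k) u =
      w • if w - 1 = u then (c u : ℂ) else 0 := by
    rw [Finset.sum_congr rfl fun k hk => by rw [layerMatrix, Matrix.of_apply,
      Finset.card_erase_of_mem hk], Finset.sum_const, hwS]
  have hup : ∑ k ∈ Sᶜ, layerMatrix m (insert k S) u =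
      (m - w) • if w + 1 = u then (c u : ℂ) else 0 := by
    rw [Finset.sum_congr rfl fun k hk => by rw [layerMatrix, Matrix.of_apply,
      Finset.card_insert_of_notMem (Finset.mem_compl.mp hk)], Finset.sum_const,
      Finset.card_compl, Fintype.card_fin, hwS]
  have hright : (layerMatrix m * (kacMatrix (m + 1)).map Complex.ofReal) S u =
      c w * kacMatrix (m + 1) ⟨w, hwm⟩ u := by
    rw [Matrix.mul_apply, Finset.sum_eq_single ⟨w, hwm⟩]
    · simp [layerMatrix, hc, hwS]
    · intro v _ hv
      simp [layerMatrix, hwS, show w ≠ v from fun h => hv (Fin.ext h.symm)]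
    · simp
  rw [sum_flipMatrix_singleton_mul_apply, hdown, hup, hright, kacMatrix_succ_apply]
  obtain ⟨u, hu⟩ := u
  dsimp only
  by_cases hnext : w + 1 = u
  · subst hnext
    have hw : w < m := by omega
    simp only [show w - 1 ≠ w + 1 by omega, if_false, if_true, smul_zero, zero_add, nsmul_eq_mul]
    rw [Nat.cast_sub hw.le]
    exact_mod_cast (sub_mul_inv_sqrt_choose_succ hw).trans (mul_comm _ _)
  by_cases hprev : u + 1 = w
  · subst hprev
    have hu : u < m := by omega
    simp only [Nat.add_sub_cancel, show u + 1 + 1 ≠ u by omega, if_false, if_true, smul_zero,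
      add_zero, nsmul_eq_mul]
    exact_mod_cast (succ_mul_inv_sqrt_choose hu).trans (mul_comm _ _)
  obtain rfl | hw0 := Nat.eq_zero_or_pos w
  · simp [hnext]
  · simp [hnext, hprev, show w - 1 ≠ u by omega]

theorem flipMatrix_univ_mul_layerMatrix (m : ℕ) :
    flipMatrix ℂ (Finset.univ : Finset (Fin m)) * layerMatrix m =
      layerMatrix m * revMatrix (m + 1) := by
  ext S u
  obtain ⟨w, hwS⟩ : ∃ w, S.card = w := ⟨_, rfl⟩
  have hwm : w < m + 1 := by simpa [← hwS, Nat.lt_succ_iff] using Finset.card_le_univ S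
  have hcompl : S ∆ Finset.univ = Sᶜ := by
    rw [← Finset.top_eq_univ, symmDiff_top, hnot_eq_compl]
  rw [flipMatrix_mul_apply, hcompl, Matrix.mul_apply, Finset.sum_eq_single ⟨w, hwm⟩]
  · simp only [layerMatrix, revMatrix, Matrix.of_apply, Finset.card_compl, Fintype.card_fin, hwS,
      if_true, mul_ite, mul_one, mul_zero]
    by_cases hwu : w + u = m
    · rw [if_pos (by omega), if_pos (by omega), Nat.choose_symm_of_eq_add hwu.symm]
    · rw [if_neg (by omega), if_neg (by omega)]
  · intro v _ hv
    simp [layerMatrix, hwS, show w ≠ v from fun h => hv (Fin.ext h.symm)]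
  · simp

theorem revMatrix_mulVec_single (n : ℕ) (u : Fin n) :
    revMatrix n *ᵥ Pi.single u 1 = Pi.single u.rev 1 := by
  ext a
  rw [Matrix.mulVec_single_one, Matrix.col_apply, revMatrix, Matrix.of_apply, Pi.single_apply]
  simp only [Fin.ext_iff, Fin.val_rev]
  split_ifs <;> first | rfl | omega

theorem exp_kacMatrix (n : ℕ) :
    exp ((-(Complex.I * ((Real.pi : ℂ) / 2))) • (kacMatrix n).map Complex.ofReal) =
      (-Complex.I) ^ (n - 1) • revMatrix n := by
  cases n with
  | zero => exact Subsingleton.elim _ _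
  | succ m =>
    set c := -(Complex.I * ((Real.pi : ℂ) / 2))
    set V := layerMatrix m
    have hAV : (c • ∑ k : Fin m, flipMatrix ℂ {k}) * V =
        V * (c • (kacMatrix (m + 1)).map Complex.ofReal) := by
      rw [Matrix.smul_mul, sum_flipMatrix_singleton_mul_layerMatrix, Matrix.mul_smul]
    have hexp := Matrix.exp_mul_eq_mul_exp_of_mul_eq hAV
    rw [exp_smul_sum_flipMatrix_singleton, Finset.card_univ, Fintype.card_fin, Matrix.smul_mul,
      flipMatrix_univ_mul_layerMatrix] at hexp
    calc exp (c • (kacMatrix (m + 1)).map Complex.ofReal)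
        = Vᵀ * (V * exp (c • (kacMatrix (m + 1)).map Complex.ofReal)) := by
          rw [← Matrix.mul_assoc, layerMatrix_transpose_mul_self, Matrix.one_mul]
      _ = (-Complex.I) ^ m • revMatrix (m + 1) := by
          rw [← hexp, Matrix.mul_smul, ← Matrix.mul_assoc, layerMatrix_transpose_mul_self,
            Matrix.one_mul]

theorem stmt11_general (n : ℕ) :
    NormedSpace.exp ((-(Complex.I * ((Real.pi : ℂ) / 2))) •
        (kacMatrix n).map Complex.ofReal) = (-Complex.I) ^ (n - 1) • revMatrix n ∧
      ∀ u : Fin n,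
        (NormedSpace.exp ((-(Complex.I * ((Real.pi : ℂ) / 2))) •
            (kacMatrix n).map Complex.ofReal)).mulVec (Pi.single u 1 : Fin n → ℂ) =
          (-Complex.I) ^ (n - 1) • (Pi.single u.rev 1 : Fin n → ℂ) :=
  ⟨exp_kacMatrix n, fun u => by rw [exp_kacMatrix, Matrix.smul_mulVec, revMatrix_mulVec_single]⟩

/-- `exp(−i(π/2) K_n) = (−i)^{n−1} R_n`: single-particle perfect state
transfer between mirror-symmetric vertices of the weighted path at time `π/2`. -/
theorem stmt11 (n : ℕ) (hn : 1 ≤ n) :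
    NormedSpace.exp ((-(Complex.I * ((Real.pi : ℂ) / 2))) •
        (kacMatrix n).map Complex.ofReal) = (-Complex.I) ^ (n - 1) • revMatrix n ∧
      ∀ u : Fin n,
        (NormedSpace.exp ((-(Complex.I * ((Real.pi : ℂ) / 2))) •
            (kacMatrix n).map Complex.ofReal)).mulVec (Pi.single u 1 : Fin n → ℂ) =
          (-Complex.I) ^ (n - 1) • (Pi.single u.rev 1 : Fin n → ℂ) :=
  stmt11_general n
end

section
/- For n ≥ 1, let H_n be the real symmetric matrix indexed by the 2^n vertices x : Fin n → ZMod 2 of the n-dimensional hypercube, with H_n(x, y) = 1 if x and y differ in exactly one coordinate (Hamming distance 1) and H_n(x, y) = 0 otherwise. Let f(x) ∈ {0,…,n} be the Hamming weight of x (the number of coordinates equal to 1), and define the 2^n × (n+1) matrix Q by Q(x, c) = 1/√(binom(n, c)) if f(x) = c and 0 otherwise, where binom(n,c) is the binomial coefficient. Then Qᵀ H_n Q = K_{n+1}, the (n+1)×(n+1) matrix indexed by {0,…,n} with (K_{n+1})(j, j+1) = (K_{n+1})(j+1, j) = √((j+1)(n−j)) for 0 ≤ j ≤ n−1 and all other entries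 0. -/
open Matrix

/-- Adjacency matrix of the `n`-dimensional hypercube: vertices are `x : Fin n → ZMod 2`,
adjacent iff they differ in exactly one coordinate. -/
def cubeMatrix (n : ℕ) : Matrix (Fin n → ZMod 2) (Fin n → ZMod 2) ℝ :=
  Matrix.of fun x y =>
    if (Finset.univ.filter fun j => x j ≠ y j).card = 1 then 1 else 0

/-- The normalized partition matrix of the Hamming-weight equitable partition of the
hypercube: `Q(x, c) = 1/√(binom(n,c))` if the Hamming weight of `x` is `c`, else `0`. -/
noncomputable def hammingPartitionMatrix (n : ℕ) :
    Matrix (Fin n → ZMod 2) (Fin (n + 1)) ℝ :=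
  Matrix.of fun x c =>
    if (Finset.univ.filter fun j => x j = 1).card = (c : ℕ) then
      1 / Real.sqrt (n.choose (c : ℕ)) else 0

/-! The columns of `Q` are orthonormal because the weight-`c` cell has `binom(n, c)` vertices,
so `Qᵀ H Q = K` follows from `H Q = Q K`. The neighbours of `x` are the `x + e_j`: flipping a
one lowers the weight and flipping a zero raises it, so a vertex of weight `w` has `w` neighbours
of weight `w - 1` and `n - w` of weight `w + 1`. Rescaled by the normalisation `1/√binom(n, c)`,
these counts become the weights `√((k + 1)(n - k))` of the Kac matrix, by
`binom(n, k + 1) (k + 1) = binom(n, k) (n - k)`. -/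

open Finset

theorem ZMod.two_ne_iff_eq_add_one (a b : ZMod 2) : a ≠ b ↔ b = a + 1 := by decide +revert

theorem ZMod.two_eq_zero_iff_ne_one (a : ZMod 2) : a = 0 ↔ a ≠ 1 := by decide +revert

theorem ZMod.two_eq_of_eq_one_iff {a b : ZMod 2} (h : a = 1 ↔ b = 1) : a = b := by
  decide +revert

section Weight

variable {ι : Type*} [Fintype ι]

def hammingWeight (x : ι → ZMod 2) : ℕ := #{j | x j = 1}

theorem hammingWeight_le_card (x : ι → ZMod 2) : hammingWeight x ≤ Fintype.card ι :=
  card_filter_le _ _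

theorem card_filter_ne_one (x : ι → ZMod 2) :
    #{j | ¬x j = 1} = Fintype.card ι - hammingWeight x := by
  have := card_filter_add_card_filter_not (s := univ) (fun j => x j = 1)
  rw [hammingWeight, ← card_univ]
  omega

variable [DecidableEq ι]

def funZModTwoEquivFinset : (ι → ZMod 2) ≃ Finset ι where
  toFun x := {j | x j = 1}
  invFun s j := if j ∈ s then 1 else 0
  left_inv x := funext fun j => ZMod.two_eq_of_eq_one_iff (by simp)
  right_inv s := by ext j; simp

theorem card_hammingWeight_eq (k : ℕ) :
    #{x : ι → ZMod 2 | hammingWeight x = k} = (Fintype.card ι).choose k := by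
  rw [← card_univ, ← card_powersetCard]
  exact card_equiv funZModTwoEquivFinset fun x => by
    rw [mem_filter, mem_powersetCard_univ]; simp [hammingWeight, funZModTwoEquivFinset]

theorem hammingWeight_add_single_of_eq_one {x : ι → ZMod 2} {j : ι} (h : x j = 1) :
    hammingWeight (x + Pi.single j 1) + 1 = hammingWeight x := by
  unfold hammingWeight
  rw [← card_erase_add_one (s := {i | x i = 1}) (a := j) (by simpa using h)]
  congr 2
  ext i; by_cases hi : i = j <;> simp [hi, h]

theorem hammingWeight_add_single_of_ne_one {x : ι → ZMod 2} {j : ι} (h : x j ≠ 1) :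
    hammingWeight (x + Pi.single j 1) = hammingWeight x + 1 := by
  unfold hammingWeight
  rw [← card_insert_of_notMem (s := {i | x i = 1}) (a := j) (by simpa using h)]
  congr 1
  ext i; by_cases hi : i = j <;> simp [hi, h, ZMod.two_eq_zero_iff_ne_one]

end Weight

theorem hammingDist_eq_one_iff {ι : Type*} [Fintype ι] [DecidableEq ι] {x y : ι → ZMod 2} :
    hammingDist x y = 1 ↔ ∃ j, y = x + Pi.single j 1 := by
  constructor
  · intro h
    obtain ⟨j, hj⟩ := card_eq_one.1 h
    refine ⟨j, funext fun i => ?_⟩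
    have hi := Finset.ext_iff.1 hj i
    simp only [mem_filter, mem_univ, true_and, mem_singleton] at hi
    by_cases hij : i = j
    · subst hij; simpa using (ZMod.two_ne_iff_eq_add_one _ _).1 (hi.2 rfl)
    · simpa [hij] using (not_not.1 (mt hi.1 hij)).symm
  · rintro ⟨j, rfl⟩
    refine card_eq_one.2 ⟨j, ?_⟩
    ext i; by_cases hij : i = j <;> simp [hij]

theorem add_single_one_injective {ι : Type*} [DecidableEq ι] (x : ι → ZMod 2) :
    Function.Injective fun j => x + Pi.single j 1 := by
  intro i j h
  have := congrFun (add_left_cancel h) i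
  by_contra hij
  simp [hij] at this

theorem cubeMatrix_mul_apply {n : ℕ} {α : Type*} (M : Matrix (Fin n → ZMod 2) α ℝ)
    (x : Fin n → ZMod 2) (c : α) :
    (cubeMatrix n * M) x c = ∑ j, M (x + Pi.single j 1) c := by
  have hnbr : ({y | hammingDist x y = 1} : Finset _) = univ.image fun j => x + Pi.single j 1 := by
    ext y
    simp only [mem_filter, mem_univ, true_and, mem_image, hammingDist_eq_one_iff]
    exact exists_congr fun j => eq_comm
  change ∑ y, (if hammingDist x y = 1 then (1 : ℝ) else 0) * M y c = _
  simp only [ite_mul, one_mul, zero_mul]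
  rw [← sum_filter, hnbr, sum_image fun i _ j _ h => add_single_one_injective x h]

theorem hammingPartitionMatrix_apply {n : ℕ} (x : Fin n → ZMod 2) (c : Fin (n + 1)) :
    hammingPartitionMatrix n x c =
      if hammingWeight x = c then 1 / √(n.choose c) else 0 :=
  rfl

theorem hammingWeight_lt_succ {n : ℕ} (x : Fin n → ZMod 2) : hammingWeight x < n + 1 :=
  Nat.lt_succ_of_le (by simpa using hammingWeight_le_card x)

theorem hammingPartitionMatrix_mul_apply {n : ℕ} {α : Type*} (M : Matrix (Fin (n + 1)) α ℝ)
    (x : Fin n → ZMod 2) (c : α) :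
    (hammingPartitionMatrix n * M) x c =
      1 / √(n.choose (hammingWeight x)) * M ⟨hammingWeight x, hammingWeight_lt_succ x⟩ c := by
  rw [mul_apply, sum_eq_single ⟨hammingWeight x, hammingWeight_lt_succ x⟩]
  · simp [hammingPartitionMatrix_apply]
  · intro d _ hd
    rw [hammingPartitionMatrix_apply, if_neg fun h => hd (Fin.ext h.symm), zero_mul]
  · simp

theorem transpose_hammingPartitionMatrix_mul_self (n : ℕ) :
    (hammingPartitionMatrix n)ᵀ * hammingPartitionMatrix n = 1 := by
  ext a b
  simp only [mul_apply, transpose_apply, hammingPartitionMatrix_apply, ite_mul, zero_mul,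
    ← sum_filter]
  rcases eq_or_ne a b with rfl | hab
  · have hpos : (0 : ℝ) < n.choose a := by
      exact_mod_cast Nat.choose_pos (Nat.lt_succ_iff.1 a.isLt)
    rw [sum_congr rfl fun x hx => by rw [if_pos (mem_filter.1 hx).2], sum_const,
      card_hammingWeight_eq, Fintype.card_fin, nsmul_eq_mul, one_apply_eq, one_div_mul_one_div,
      Real.mul_self_sqrt hpos.le, mul_one_div_cancel hpos.ne']
  · rw [sum_congr rfl fun x hx => by
        rw [if_neg fun h => hab (Fin.ext ((mem_filter.1 hx).2.symm.trans h)), mul_zero],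
      sum_const_zero, one_apply_ne hab]

section ChooseSqrt

variable {n k : ℕ}

theorem cast_choose_succ_mul_s12 (hk : k ≤ n) :
    (n.choose (k + 1) : ℝ) * (k + 1) = n.choose k * (n - k) := by
  rw [← Nat.cast_sub hk]; exact_mod_cast Nat.choose_succ_right_eq n k

theorem sub_div_sqrt_choose_succ (hk : k < n) :
    ((n : ℝ) - k) / √(n.choose (k + 1)) = √((k + 1) * ((n : ℝ) - k)) / √(n.choose k) := by
  have hnk : (0 : ℝ) ≤ n - k := by rw [sub_nonneg]; exact_mod_cast hk.le
  rw [div_eq_div_iff (Real.sqrt_pos.2 (by exact_mod_cast Nat.choose_pos hk)).ne'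
    (Real.sqrt_pos.2 (by exact_mod_cast Nat.choose_pos hk.le)).ne']
  calc ((n : ℝ) - k) * √(n.choose k) = √((n - k) ^ 2 * n.choose k) := by
        rw [Real.sqrt_mul (sq_nonneg _), Real.sqrt_sq hnk]
    _ = √((k + 1) * (n - k) * n.choose (k + 1)) := by
        congr 1; linear_combination (k - n : ℝ) * cast_choose_succ_mul_s12 hk.le
    _ = _ := Real.sqrt_mul (mul_nonneg (by positivity) hnk) _

theorem succ_div_sqrt_choose (hk : k < n) :
    ((k : ℝ) + 1) / √(n.choose k) = √((k + 1) * ((n : ℝ) - k)) / √(n.choose (k + 1)) := by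
  have hnk : (0 : ℝ) ≤ n - k := by rw [sub_nonneg]; exact_mod_cast hk.le
  rw [div_eq_div_iff (Real.sqrt_pos.2 (by exact_mod_cast Nat.choose_pos hk.le)).ne'
    (Real.sqrt_pos.2 (by exact_mod_cast Nat.choose_pos hk)).ne']
  calc ((k : ℝ) + 1) * √(n.choose (k + 1)) = √((k + 1) ^ 2 * n.choose (k + 1)) := by
        rw [Real.sqrt_mul (sq_nonneg _), Real.sqrt_sq (by positivity)]
    _ = √((k + 1) * (n - k) * n.choose k) := by
        congr 1; linear_combination (k + 1 : ℝ) * cast_choose_succ_mul_s12 hk.le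
    _ = _ := Real.sqrt_mul (mul_nonneg (by positivity) hnk) _

end ChooseSqrt

theorem cubeMatrix_mul_hammingPartitionMatrix_apply {n : ℕ} (x : Fin n → ZMod 2)
    (c : Fin (n + 1)) :
    (cubeMatrix n * hammingPartitionMatrix n) x c =
      hammingWeight x * (if (c : ℕ) + 1 = hammingWeight x then 1 / √(n.choose c) else 0) +
        ((n : ℝ) - hammingWeight x) *
          (if hammingWeight x + 1 = c then 1 / √(n.choose c) else 0) := by
  rw [cubeMatrix_mul_apply, ← sum_filter_add_sum_filter_not univ (fun j => x j = 1)]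
  have hdown : ∀ j ∈ ({j | x j = 1} : Finset (Fin n)),
      hammingPartitionMatrix n (x + Pi.single j 1) c =
        if (c : ℕ) + 1 = hammingWeight x then 1 / √(n.choose c) else 0 := by
    intro j hj
    rw [hammingPartitionMatrix_apply,
      ← hammingWeight_add_single_of_eq_one (mem_filter.1 hj).2]
    split_ifs <;> first | rfl | omega
  have hup : ∀ j ∈ ({j | ¬x j = 1} : Finset (Fin n)),
      hammingPartitionMatrix n (x + Pi.single j 1) c =
        if hammingWeight x + 1 = c then 1 / √(n.choose c) else 0 := by
    intro j hj
    rw [hammingPartitionMatrix_apply, hammingWeight_add_single_of_ne_one (mem_filter.1 hj).2]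
  rw [sum_congr rfl hdown, sum_congr rfl hup, sum_const, sum_const, card_filter_ne_one,
    Fintype.card_fin, nsmul_eq_mul, nsmul_eq_mul,
    Nat.cast_sub (by simpa using hammingWeight_le_card x)]
  rfl

theorem one_div_sqrt_choose_mul_kacMatrix {n w : ℕ} (hw : w < n + 1) (c : Fin (n + 1)) :
    1 / √(n.choose w) * kacMatrix (n + 1) ⟨w, hw⟩ c =
      w * (if (c : ℕ) + 1 = w then 1 / √(n.choose c) else 0) +
        ((n : ℝ) - w) * (if w + 1 = c then 1 / √(n.choose c) else 0) := by
  obtain ⟨c, hc⟩ := c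
  simp only [kacMatrix, of_apply, Nat.cast_add, Nat.cast_one, add_sub_cancel_right]
  by_cases hup : w + 1 = c
  · subst hup
    rw [if_pos rfl, if_neg (by omega), if_pos rfl, mul_zero, zero_add, mul_one_div,
      sub_div_sqrt_choose_succ (by omega), one_div_mul_eq_div]
  by_cases hdown : c + 1 = w
  · subst hdown
    rw [if_neg hup, if_pos rfl, if_pos rfl, if_neg hup, mul_zero, add_zero, mul_one_div,
      Nat.cast_succ, succ_div_sqrt_choose (by omega), one_div_mul_eq_div]
  · simp only [if_neg hup, if_neg hdown, mul_zero, add_zero]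

theorem cubeMatrix_mul_hammingPartitionMatrix (n : ℕ) :
    cubeMatrix n * hammingPartitionMatrix n = hammingPartitionMatrix n * kacMatrix (n + 1) := by
  ext x c
  rw [cubeMatrix_mul_hammingPartitionMatrix_apply, hammingPartitionMatrix_mul_apply,
    one_div_sqrt_choose_mul_kacMatrix]

theorem stmt12_general (n : ℕ) :
    (hammingPartitionMatrix n)ᵀ * cubeMatrix n * hammingPartitionMatrix n =
      kacMatrix (n + 1) := by
  rw [Matrix.mul_assoc, cubeMatrix_mul_hammingPartitionMatrix, ← Matrix.mul_assoc,
    transpose_hammingPartitionMatrix_mul_self, one_mul]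

/-- the quotient of the hypercube under the Hamming-weight equitable
partition is the hypercubically weighted path: `Qᵀ H_n Q = K_{n+1}`. -/
theorem stmt12 (n : ℕ) (hn : 1 ≤ n) :
    (hammingPartitionMatrix n)ᵀ * cubeMatrix n * hammingPartitionMatrix n =
      kacMatrix (n + 1) :=
  stmt12_general n
end

section
/- For n ≥ 1, let H_n be the real symmetric matrix indexed by the 2^n vertices x : Fin n → ZMod 2 of the n-dimensional hypercube, with H_n(x, y) = 1 if x and y differ in exactly one coordinate (Hamming distance 1) and H_n(x, y) = 0 otherwise, regarded as a complex matrix. Then exp(−i (π/2) H_n) = (−i)^n · T_n, where T_n is the permutation matrix with T_n(x, y) = 1 if y(j) = x(j) + 1 for every coordinate j (i.e., y is the antipode of x) and T_n(x, y) = 0 otherwise. -/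
open Matrix

/-- The antipodal permutation matrix: `T(x, y) = 1` iff `y(j) = x(j) + 1` for all `j`. -/
def antipodeMatrix (n : ℕ) : Matrix (Fin n → ZMod 2) (Fin n → ZMod 2) ℂ :=
  Matrix.of fun x y => if ∀ j, y j = x j + 1 then 1 else 0

/-!
The hypercube adjacency matrix is the sum `H_n = ∑ⱼ T(eⱼ)` of the translation matrices by the
standard basis vectors of `(ZMod 2)ⁿ`. These commute and are involutions, and for an involution `P`
the exponential series splits into `exp (z • P) = cosh z • 1 + sinh z • P`, which at `z = -iπ/2`
is `-i • P`. Hence `exp (-iπ/2 • H_n) = ∏ⱼ (-i • T(eⱼ)) = (-i)ⁿ • T(∑ⱼ eⱼ)`, and translation by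
`∑ⱼ eⱼ = 1` is the antipodal map.
-/

open Complex Finset NormedSpace

namespace NormedSpace

variable {𝔸 : Type*} [Ring 𝔸] [Algebra ℂ 𝔸] [TopologicalSpace 𝔸] [IsTopologicalRing 𝔸]
  [ContinuousSMul ℂ 𝔸] [T2Space 𝔸] {a : 𝔸}

theorem exp_smul_of_mul_self_eq_one (ha : a * a = 1) (z : ℂ) :
    exp (z • a) = cosh z • 1 + sinh z • a := by
  have hpow (m : ℕ) : a ^ (2 * m) = 1 := by rw [pow_mul, sq, ha, one_pow]
  have heven : HasSum (fun m => ((2 * m).factorial⁻¹ : ℂ) • (z • a) ^ (2 * m)) (cosh z • 1) := by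
    convert (hasSum_cosh z).smul_const (1 : 𝔸) using 2 with m
    rw [smul_pow, hpow, smul_smul, div_eq_inv_mul]
  have hodd : HasSum (fun m => ((2 * m + 1).factorial⁻¹ : ℂ) • (z • a) ^ (2 * m + 1))
      (sinh z • a) := by
    convert (hasSum_sinh z).smul_const a using 2 with m
    rw [smul_pow, pow_succ a, hpow, one_mul, smul_smul, div_eq_inv_mul]
  rw [congr_fun (exp_eq_tsum ℂ) (z • a)]
  exact (HasSum.even_add_odd (f := fun k => (k.factorial⁻¹ : ℂ) • (z • a) ^ k) heven hodd).tsum_eq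

theorem exp_neg_I_mul_pi_div_two_smul_of_mul_self_eq_one (ha : a * a = 1) :
    exp (-(I * (Real.pi / 2)) • a) = -I • a := by
  have hz : -(I * (Real.pi / 2)) = (-(Real.pi / 2) : ℂ) * I := by ring
  rw [exp_smul_of_mul_self_eq_one ha, hz, cosh_mul_I, sinh_mul_I, cos_neg, sin_neg,
    cos_pi_div_two, sin_pi_div_two, zero_smul, zero_add, neg_one_mul]

end NormedSpace

section Translation

variable {G : Type*} [AddCommGroup G] [DecidableEq G]

def translationMatrix (R : Type*) [Zero R] [One R] (v : G) : Matrix G G R :=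
  of fun x y => if y = x + v then 1 else 0

variable {R : Type*} [Semiring R]

theorem translationMatrix_zero : translationMatrix R (0 : G) = 1 := by
  ext x y
  simp [translationMatrix, one_apply, eq_comm]

variable [Fintype G]

theorem translationMatrix_mul (u v : G) :
    translationMatrix R u * translationMatrix R v = translationMatrix R (u + v) := by
  ext x y
  simp only [translationMatrix, mul_apply, of_apply, ite_mul, one_mul, zero_mul]
  rw [sum_ite_eq' univ (x + u) fun z => if y = z + v then (1 : R) else 0]
  simp [add_assoc]

theorem commute_translationMatrix (u v : G) :
    Commute (translationMatrix R u) (translationMatrix R v) := by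
  rw [Commute, SemiconjBy, translationMatrix_mul, translationMatrix_mul, add_comm]

theorem translationMatrix_mul_self {v : G} (hv : v + v = 0) :
    translationMatrix R v * translationMatrix R v = 1 := by
  rw [translationMatrix_mul, hv, translationMatrix_zero]

theorem exp_sum_neg_I_mul_pi_div_two_smul_translationMatrix {ι : Type*} (e : ι → G)
    (he : ∀ j, e j + e j = 0) (s : Finset ι) :
    exp (∑ j ∈ s, -(I * (Real.pi / 2)) • translationMatrix ℂ (e j)) =
      (-I) ^ #s • translationMatrix ℂ (∑ j ∈ s, e j) := by
  classical
  induction s using Finset.induction_on with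
  | empty => simp [translationMatrix_zero]
  | insert j s hj ih =>
    have hcomm : Commute (-(I * (Real.pi / 2)) • translationMatrix ℂ (e j))
        (∑ k ∈ s, -(I * (Real.pi / 2)) • translationMatrix ℂ (e k)) :=
      Commute.sum_right _ _ _ fun k _ =>
        ((commute_translationMatrix (e j) (e k)).smul_left _).smul_right _
    rw [sum_insert hj, Matrix.exp_add_of_commute _ _ hcomm,
      exp_neg_I_mul_pi_div_two_smul_of_mul_self_eq_one (translationMatrix_mul_self (he j)), ih,
      smul_mul_smul_comm, translationMatrix_mul, card_insert_of_notMem hj, pow_succ',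
      sum_insert hj]

end Translation

theorem filter_ne_eq_singleton_iff_eq_add_single {n : ℕ} {x y : Fin n → ZMod 2} {j : Fin n} :
    ({k | x k ≠ y k} : Finset (Fin n)) = {j} ↔ y = x + Pi.single j 1 := by
  simp only [Finset.ext_iff, funext_iff, mem_filter, mem_univ, true_and, mem_singleton,
    Pi.add_apply]
  refine forall_congr' fun k => ?_
  rcases eq_or_ne k j with rfl | hk
  · simp only [Pi.single_eq_same, iff_true]
    generalize x k = a, y k = b
    revert a b
    decide
  · simp only [hk, Pi.single_eq_of_ne hk, add_zero, iff_false, not_not]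
    exact eq_comm

theorem cubeMatrix_map_ofReal (n : ℕ) :
    (cubeMatrix n).map ofReal = ∑ j, translationMatrix ℂ (Pi.single j (1 : ZMod 2)) := by
  ext x y
  simp only [map_apply, cubeMatrix, of_apply, Matrix.sum_apply, translationMatrix,
    ← filter_ne_eq_singleton_iff_eq_add_single]
  split_ifs with h
  · obtain ⟨j₀, hj₀⟩ := card_eq_one.mp h
    simp [hj₀, singleton_inj]
  · rw [card_eq_one, not_exists] at h
    simp [h]

theorem translationMatrix_one (n : ℕ) :
    translationMatrix ℂ (1 : Fin n → ZMod 2) = antipodeMatrix n := by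
  ext x y
  simp [translationMatrix, antipodeMatrix, funext_iff]

theorem stmt13_general (n : ℕ) :
    NormedSpace.exp ((-(Complex.I * ((Real.pi : ℂ) / 2))) •
        (cubeMatrix n).map Complex.ofReal) = (-Complex.I) ^ n • antipodeMatrix n := by
  have hsingle (j : Fin n) : (Pi.single j 1 + Pi.single j 1 : Fin n → ZMod 2) = 0 := by
    rw [← Pi.single_add, show (1 + 1 : ZMod 2) = 0 by decide, Pi.single_zero]
  have hones : ∑ j, (Pi.single j 1 : Fin n → ZMod 2) = 1 := univ_sum_single 1
  rw [cubeMatrix_map_ofReal, smul_sum,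
    exp_sum_neg_I_mul_pi_div_two_smul_translationMatrix _ hsingle, card_univ, Fintype.card_fin,
    hones, translationMatrix_one]

/-- `exp(−i(π/2) H_n) = (−i)^n T_n`: perfect state transfer between
antipodal vertices of the hypercube at time `π/2`, with phase `(−i)^n`. -/
theorem stmt13 (n : ℕ) (hn : 1 ≤ n) :
    NormedSpace.exp ((-(Complex.I * ((Real.pi : ℂ) / 2))) •
        (cubeMatrix n).map Complex.ofReal) = (-Complex.I) ^ n • antipodeMatrix n :=
  stmt13_general n
end

section
/- Fix integers k ≥ 1 and n ≥ 1, and let G be the graph whose vertices are the injective tuples x : Fin k → Fin n, with x adjacent to y if and only if there exists a coordinate i such that x(j) = y(j) for all j ≠ i and either x(i) + 1 = y(i) or y(i) + 1 = x(i) (as natural numbers). Then two injective tuples x and y lie in the same connected component of G (are reachable from one another) if and only if they have the same relative order, i.e., for all coordinates i, j one has x(i) < x(j) ↔ y(i) < y(j). -/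
/-- Configuration moves of `k` distinguishable hard-core bosons on the path with `n`
vertices: `x` and `y` (injective tuples) are related iff they agree except at one
coordinate `i`, where they differ by one site. -/
def hcRel (n k : ℕ) (x y : {x : Fin k → Fin n // Function.Injective x}) : Prop :=
  ∃ i : Fin k, (∀ j : Fin k, j ≠ i → x.1 j = y.1 j) ∧
    ((x.1 i : ℕ) + 1 = (y.1 i : ℕ) ∨ (y.1 i : ℕ) + 1 = (x.1 i : ℕ))

/-- The configuration-space graph of `k` distinguishable hard-core bosons on the path
with `n` vertices. -/
def hcGraph (n k : ℕ) : SimpleGraph {x : Fin k → Fin n // Function.Injective x} :=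
  SimpleGraph.fromRel (hcRel n k)

/-!
A move shifts one particle to a vacant neighbouring site, so it never jumps over another
particle and the relative order is invariant along walks. Conversely, every configuration
is connected to its *packed* configuration, where the particle of rank `r` sits at site `r`:
as long as the configuration is not packed, the lowest particle standing above its rank
has a vacant site just below it, and moving it there lowers the sum of the positions.
Configurations with the same order have the same packed configuration.
-/

open Finset

namespace HardCore

section Rank

variable {ι α : Type*} [Fintype ι] [LinearOrder α]

def rank (x : ι → α) (i : ι) : ℕ :=
  #{j | x j < x i}

theorem rank_lt_rank {x : ι → α} {a b : ι} (h : x a < x b) : rank x a < rank x b := by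
  refine card_lt_card ⟨fun j hj => ?_, fun hsub => ?_⟩
  · simp only [mem_filter, mem_univ, true_and] at hj ⊢
    exact hj.trans h
  · simpa using hsub (by simpa using h : a ∈ ({j | x j < x b} : Finset ι))

theorem rank_injective {x : ι → α} (hx : Function.Injective x) : Function.Injective (rank x) := by
  intro a b hab
  by_contra hne
  rcases lt_or_gt_of_ne (hx.ne hne) with h | h
  · exact (rank_lt_rank h).ne hab
  · exact (rank_lt_rank h).ne' hab

theorem rank_congr {x : ι → α} {β : Type*} [LinearOrder β] {y : ι → β}
    (h : ∀ a b, x a < x b ↔ y a < y b) : rank x = rank y := by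
  funext i
  exact congrArg card (filter_congr fun j _ => h j i)

theorem rank_eq_rank_add_one {x : ι → α} (hx : Function.Injective x) {i j : ι}
    (h : x j ⋖ x i) : rank x i = rank x j + 1 := by
  classical
  refine le_antisymm ((card_le_card fun b hb => ?_).trans (card_insert_le j _))
    (rank_lt_rank h.lt)
  simp only [mem_filter, mem_univ, true_and, mem_insert] at hb ⊢
  rcases (h.le_of_lt hb).eq_or_lt with hbj | hbj
  · exact Or.inl (hx hbj)
  · exact Or.inr hbj

end Rank

theorem rank_le_val {n : ℕ} {ι : Type*} [Fintype ι] {x : ι → Fin n} (hx : Function.Injective x)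
    (i : ι) : rank x i ≤ x i := by
  simpa [rank, Fin.card_Iio] using
    card_le_card_of_injOn (s := {j | x j < x i}) (t := Iio (x i)) x
      (fun j hj => by simpa using hj) hx.injOn

variable {n k : ℕ}

def packed (x : {x : Fin k → Fin n // Function.Injective x}) :
    {x : Fin k → Fin n // Function.Injective x} :=
  ⟨fun i => ⟨rank x.1 i, (rank_le_val x.2 i).trans_lt (x.1 i).2⟩,
    fun _ _ h => rank_injective x.2 (congrArg Fin.val h)⟩

theorem packed_eq_packed {x y : {x : Fin k → Fin n // Function.Injective x}}
    (h : ∀ a b, x.1 a < x.1 b ↔ y.1 a < y.1 b) : packed x = packed y := by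
  ext i
  exact congrFun (rank_congr h) i

theorem hcRel_lt_iff {x y : {x : Fin k → Fin n // Function.Injective x}} (h : hcRel n k x y)
    (a b : Fin k) : x.1 a < x.1 b ↔ y.1 a < y.1 b := by
  obtain ⟨i, hfix, hmove⟩ := h
  by_cases hab : a = b
  · simp [hab]
  by_cases ha : a = i <;> by_cases hb : b = i
  · exact absurd (ha.trans hb.symm) hab
  · subst ha
    have hx : (x.1 b : ℕ) ≠ x.1 a := fun e => hab (x.2 (Fin.ext e)).symm
    have hy : (y.1 b : ℕ) ≠ y.1 a := fun e => hab (y.2 (Fin.ext e)).symm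
    rw [Fin.lt_def, Fin.lt_def, hfix b hb] at *
    omega
  · subst hb
    have hx : (x.1 a : ℕ) ≠ x.1 b := fun e => hab (x.2 (Fin.ext e))
    have hy : (y.1 a : ℕ) ≠ y.1 b := fun e => hab (y.2 (Fin.ext e))
    rw [Fin.lt_def, Fin.lt_def, hfix a ha] at *
    omega
  · rw [hfix a ha, hfix b hb]

theorem adj_lt_iff {x y : {x : Fin k → Fin n // Function.Injective x}} (h : (hcGraph n k).Adj x y)
    (a b : Fin k) : x.1 a < x.1 b ↔ y.1 a < y.1 b := by
  rcases h.2 with h | h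
  · exact hcRel_lt_iff h a b
  · exact (hcRel_lt_iff h a b).symm

theorem reachable_lt_iff {x y : {x : Fin k → Fin n // Function.Injective x}}
    (h : (hcGraph n k).Reachable x y) (a b : Fin k) : x.1 a < x.1 b ↔ y.1 a < y.1 b := by
  obtain ⟨w⟩ := h
  induction w with
  | nil => rfl
  | cons hadj _ ih => exact (adj_lt_iff hadj a b).trans ih

theorem exists_vacant_below {x : {x : Fin k → Fin n // Function.Injective x}} (h : x ≠ packed x) :
    ∃ i, 0 < (x.1 i : ℕ) ∧ ∀ j, (x.1 j : ℕ) + 1 ≠ x.1 i := by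
  have hS : ({i | rank x.1 i < x.1 i} : Finset (Fin k)).Nonempty := by
    by_contra hS
    rw [not_nonempty_iff_eq_empty, filter_eq_empty_iff] at hS
    refine h (Subtype.ext (funext fun i => Fin.ext ?_))
    exact (Nat.le_antisymm (rank_le_val x.2 i) (not_lt.1 (hS (mem_univ i)))).symm
  obtain ⟨i, hi, hmin⟩ := exists_min_image _ (fun i => (x.1 i : ℕ)) hS
  simp only [mem_filter, mem_univ, true_and] at hi hmin
  refine ⟨i, by omega, fun j hj => ?_⟩
  have hj_packed : rank x.1 j = x.1 j :=
    le_antisymm (rank_le_val x.2 j) (not_lt.1 fun hj' => by have := hmin j hj'; omega)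
  have := rank_eq_rank_add_one x.2 (Fin.covBy_iff.2 (Nat.covBy_iff_add_one_eq.2 hj))
  omega

theorem exists_adj_sum_lt {x : {x : Fin k → Fin n // Function.Injective x}} {i : Fin k}
    (hpos : 0 < (x.1 i : ℕ)) (hvac : ∀ j, (x.1 j : ℕ) + 1 ≠ x.1 i) :
    ∃ y, (hcGraph n k).Adj x y ∧ ∑ j, (y.1 j : ℕ) < ∑ j, (x.1 j : ℕ) := by
  set v : Fin n := ⟨x.1 i - 1, by omega⟩
  have hv_succ : (v : ℕ) + 1 = x.1 i := Nat.sub_add_cancel hpos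
  have hv : ∀ j, x.1 j ≠ v := fun j hj => hvac j (by rw [hj, hv_succ])
  have hinj : Function.Injective (Function.update x.1 i v) := by
    intro a b hab
    by_cases ha : a = i <;> by_cases hb : b = i
    · rw [ha, hb]
    · subst ha
      rw [Function.update_self, Function.update_of_ne hb] at hab
      exact absurd hab.symm (hv b)
    · subst hb
      rw [Function.update_self, Function.update_of_ne ha] at hab
      exact absurd hab (hv a)
    · rw [Function.update_of_ne ha, Function.update_of_ne hb] at hab
      exact x.2 hab
  have hlt : (v : ℕ) < x.1 i := by omega
  refine ⟨⟨_, hinj⟩, ⟨fun he => ?_, Or.inl ⟨i, fun j hj => ?_, Or.inr ?_⟩⟩, ?_⟩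
  · exact hv i (by simpa using congrFun (congrArg Subtype.val he) i)
  · simp [hj]
  · simpa using hv_succ
  · refine sum_lt_sum (fun j _ => ?_) ⟨i, mem_univ i, by simpa using hlt⟩
    rcases eq_or_ne j i with rfl | hj
    · simpa using hlt.le
    · simp [hj]

theorem reachable_packed (x : {x : Fin k → Fin n // Function.Injective x}) :
    (hcGraph n k).Reachable x (packed x) := by
  by_cases h : x = packed x
  · rw [← h]
  · obtain ⟨i, hpos, hvac⟩ := exists_vacant_below h
    obtain ⟨y, hxy, hsum⟩ := exists_adj_sum_lt hpos hvac
    rw [packed_eq_packed (adj_lt_iff hxy)]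
    exact hxy.reachable.trans (reachable_packed y)
termination_by ∑ j, (x.1 j : ℕ)

end HardCore

theorem stmt14_general (n k : ℕ) :
    ∀ x y : {x : Fin k → Fin n // Function.Injective x},
      (hcGraph n k).Reachable x y ↔
        ∀ i j : Fin k, (x.1 i < x.1 j ↔ y.1 i < y.1 j) :=
  fun x y => ⟨HardCore.reachable_lt_iff, fun h => (HardCore.reachable_packed x).trans
    (HardCore.packed_eq_packed h ▸ (HardCore.reachable_packed y).symm)⟩

/-- two hard-core configurations on a path are connected by a sequence of
moves iff their particles have the same relative order. -/
theorem stmt14 (n k : ℕ) (hk : 1 ≤ k) (hn : 1 ≤ n) :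
    ∀ x y : {x : Fin k → Fin n // Function.Injective x},
      (hcGraph n k).Reachable x y ↔
        ∀ i j : Fin k, (x.1 i < x.1 j ↔ y.1 i < y.1 j) :=
  stmt14_general n k
end

section
/- Fix integers 1 ≤ k ≤ n, and let G be the graph whose vertices are the injective tuples x : Fin k → Fin n, with x adjacent to y if and only if there exists a coordinate i such that x(j) = y(j) for all j ≠ i and either x(i) + 1 = y(i) or y(i) + 1 = x(i) (as natural numbers). Then G has exactly k! connected components, and every connected component contains exactly binom(n, k) vertices, where binom(n,k) = n!/(k!(n−k)!). -/
/-! A move slides one particle to an adjacent free site, so particles never pass each other and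
the order type of a configuration, the permutation `Tuple.sort x` sorting its positions, is
invariant. Conversely, while some particle has a free site immediately to its left, moving it
there lowers the sum of the positions; when there is none, the occupied sites are `0, …, k - 1`.
A configuration is determined by its occupied sites and its order type, so every configuration
is connected to the unique packed one of its order type. Hence the components are indexed by
`Equiv.Perm (Fin k)`, and the component of order type `σ` is in bijection with the `k`-subsets
of `Fin n`. -/

open Finset Function

theorem Tuple.sort_eq_sort_of_forall_lt_iff {n : ℕ} {α : Type*} [LinearOrder α]
    {x y : Fin n → α} (h : ∀ a b, x a < x b ↔ y a < y b) : Tuple.sort x = Tuple.sort y := by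
  have hle : ∀ a b, x a ≤ x b ↔ y a ≤ y b := fun a b => by
    simpa only [not_lt] using (h b a).not
  refine (Tuple.eq_sort_iff.2 ⟨fun i j hij => ?_, fun i j hij hyij => ?_⟩)
  · exact (hle _ _).1 (Tuple.monotone_sort x hij)
  · have hxij : x (Tuple.sort x i) = x (Tuple.sort x j) :=
      le_antisymm ((hle _ _).2 hyij.le) ((hle _ _).2 hyij.ge)
    exact (Tuple.eq_sort_iff.1 rfl).2 i j hij hxij

theorem Finset.eq_of_isLowerSet_of_card_eq {α : Type*} [LinearOrder α] {s t : Finset α}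
    (hs : IsLowerSet (s : Set α)) (ht : IsLowerSet (t : Set α)) (h : #s = #t) : s = t := by
  rcases hs.total ht with hst | hts
  · exact eq_of_subset_of_card_le (coe_subset.1 hst) h.ge
  · exact (eq_of_subset_of_card_le (coe_subset.1 hts) h.le).symm

namespace SimpleGraph

variable {V B : Type*} {G : SimpleGraph V} {f : V → B}

noncomputable def connectedComponentEquivOfReachableIff (hf : Surjective f)
    (h : ∀ x y, G.Reachable x y ↔ f x = f y) : G.ConnectedComponent ≃ B :=
  Equiv.ofBijective (ConnectedComponent.lift f fun x y p _ => (h x y).1 p.reachable)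
    ⟨fun c d => by
      induction c, d using ConnectedComponent.ind₂ with
      | _ x y => exact fun hxy => ConnectedComponent.sound ((h x y).2 hxy),
    fun b => by
      obtain ⟨x, rfl⟩ := hf b
      exact ⟨G.connectedComponentMk x, rfl⟩⟩

end SimpleGraph

abbrev hcConfig (n k : ℕ) := {x : Fin k → Fin n // Injective x}

variable {n k : ℕ}

namespace hcConfig

def sites (x : hcConfig n k) : Finset (Fin n) := univ.image x.1

theorem card_sites (x : hcConfig n k) : #x.sites = k := by
  rw [sites, card_image_of_injective _ x.2, card_fin]

theorem comp_sort_eq_orderEmbOfFin (x : hcConfig n k) :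
    x.1 ∘ Tuple.sort x.1 = x.sites.orderEmbOfFin x.card_sites :=
  orderEmbOfFin_unique _ (fun _ => mem_image_of_mem _ (mem_univ _))
    ((Tuple.monotone_sort x.1).strictMono_of_injective (x.2.comp (Equiv.injective _)))

theorem swap_comp_apply_of_ne {x : hcConfig n k} {i j : Fin k} {p : Fin n}
    (hp : p ∉ Set.range x.1) (hj : j ≠ i) : Equiv.swap (x.1 i) p (x.1 j) = x.1 j :=
  Equiv.swap_apply_of_ne_of_ne (x.2.ne hj) fun h => hp ⟨j, h⟩

noncomputable def sitesSortEquiv :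
    hcConfig n k ≃ {s : Finset (Fin n) // #s = k} × Equiv.Perm (Fin k) where
  toFun x := (⟨x.sites, x.card_sites⟩, Tuple.sort x.1)
  invFun p := ⟨p.1.1.orderEmbOfFin p.1.2 ∘ ⇑p.2⁻¹,
    (p.1.1.orderEmbOfFin p.1.2).injective.comp p.2⁻¹.injective⟩
  left_inv x := by
    ext1
    simp [← x.comp_sort_eq_orderEmbOfFin, comp_assoc]
  right_inv p := by
    obtain ⟨⟨s, hs⟩, σ⟩ := p
    refine Prod.ext (Subtype.ext ?_) (Tuple.eq_sort_iff.2 ⟨?_, ?_⟩).symm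
    · simp only [sites]
      rw [← image_image, image_univ_of_surjective (Equiv.surjective _), image_orderEmbOfFin_univ]
    · simpa [comp_assoc] using (s.orderEmbOfFin hs).monotone
    · exact fun _ _ hij hij' => absurd (by simpa using hij') hij.ne

theorem sort_surjective (hkn : k ≤ n) :
    Surjective fun x : hcConfig n k => Tuple.sort x.1 := fun σ => by
  obtain ⟨s, -, hs⟩ := exists_subset_card_eq (s := (univ : Finset (Fin n))) (by simpa using hkn)
  exact ⟨sitesSortEquiv.symm (⟨s, hs⟩, σ),
    congrArg Prod.snd (sitesSortEquiv.apply_symm_apply _)⟩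

noncomputable def sortFiberEquiv (σ : Equiv.Perm (Fin k)) :
    {x : hcConfig n k // Tuple.sort x.1 = σ} ≃ {s : Finset (Fin n) // #s = k} where
  toFun x := (sitesSortEquiv x.1).1
  invFun s :=
    ⟨sitesSortEquiv.symm (s, σ), congrArg Prod.snd (sitesSortEquiv.apply_symm_apply _)⟩
  left_inv x := Subtype.ext (sitesSortEquiv.symm_apply_eq.2 (Prod.ext rfl x.2.symm))
  right_inv _ := congrArg Prod.fst (sitesSortEquiv.apply_symm_apply _)

end hcConfig

theorem hcRel.lt_iff_lt {x y : hcConfig n k} (h : hcRel n k x y) (a b : Fin k) :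
    x.1 a < x.1 b ↔ y.1 a < y.1 b := by
  obtain ⟨i, hfix, hstep⟩ := h
  have hval : ∀ j ≠ i, (x.1 j : ℕ) = y.1 j := fun j hj => congrArg Fin.val (hfix j hj)
  have hx : ∀ j ≠ i, (x.1 j : ℕ) ≠ x.1 i := fun j hj e => hj (x.2 (Fin.ext e))
  have hy : ∀ j ≠ i, (y.1 j : ℕ) ≠ y.1 i := fun j hj e => hj (y.2 (Fin.ext e))
  simp only [Fin.lt_def]
  by_cases ha : a = i <;> by_cases hb : b = i
  · rw [ha, hb, lt_self_iff_false, lt_self_iff_false]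
  · have := hval b hb; have := hx b hb; have := hy b hb
    subst ha; omega
  · have := hval a ha; have := hx a ha; have := hy a ha
    subst hb; omega
  · rw [hval a ha, hval b hb]

namespace hcGraph

theorem sort_eq_of_adj {x y : hcConfig n k} (h : (hcGraph n k).Adj x y) :
    Tuple.sort x.1 = Tuple.sort y.1 := by
  rcases (SimpleGraph.fromRel_adj _ _ _).1 h |>.2 with h | h
  · exact Tuple.sort_eq_sort_of_forall_lt_iff h.lt_iff_lt
  · exact (Tuple.sort_eq_sort_of_forall_lt_iff h.lt_iff_lt).symm

theorem sort_eq_of_reachable {x y : hcConfig n k} (h : (hcGraph n k).Reachable x y) :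
    Tuple.sort x.1 = Tuple.sort y.1 := by
  obtain ⟨p⟩ := h
  induction p with
  | nil => rfl
  | cons hadj _ ih => exact (sort_eq_of_adj hadj).trans ih

theorem adj_swap_comp {x : hcConfig n k} {i : Fin k} {p : Fin n} (hp : p ∉ Set.range x.1)
    (hpi : (p : ℕ) + 1 = x.1 i) :
    (hcGraph n k).Adj x ⟨Equiv.swap (x.1 i) p ∘ x.1, (Equiv.injective _).comp x.2⟩ := by
  have hmoved : Equiv.swap (x.1 i) p (x.1 i) = p := Equiv.swap_apply_left _ _
  refine (SimpleGraph.fromRel_adj _ _ _).2 ⟨fun h => ?_, Or.inl ⟨i, fun j hj => ?_, ?_⟩⟩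
  · have := congrArg (fun y : hcConfig n k => (y.1 i : ℕ)) h
    simp only [comp_apply, hmoved] at this
    omega
  · exact (hcConfig.swap_comp_apply_of_ne hp hj).symm
  · simp only [comp_apply, hmoved]
    omega

theorem exists_adj_sum_lt_or_isLowerSet (x : hcConfig n k) :
    (∃ y, (hcGraph n k).Adj x y ∧ ∑ i, (y.1 i : ℕ) < ∑ i, (x.1 i : ℕ)) ∨
      IsLowerSet (x.sites.map Fin.valEmbedding : Set ℕ) := by
  by_cases hfree : ∃ i, ∃ p : Fin n, p ∉ Set.range x.1 ∧ (p : ℕ) + 1 = x.1 i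
  · obtain ⟨i, p, hp, hpi⟩ := hfree
    refine Or.inl ⟨_, adj_swap_comp hp hpi, sum_lt_sum (fun j _ => ?_) ⟨i, mem_univ _, ?_⟩⟩
    · rcases eq_or_ne j i with rfl | hj
      · simp only [comp_apply, Equiv.swap_apply_left]
        omega
      · simp only [comp_apply, hcConfig.swap_comp_apply_of_ne hp hj, le_refl]
    · simp only [comp_apply, Equiv.swap_apply_left]
      omega
  · push Not at hfree
    refine Or.inr (isLowerSet_setOfPred.2 (antitone_nat_of_succ_le fun m hm => ?_))
    simp only [mem_val, hcConfig.sites, mem_map, mem_image, mem_univ, true_and,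
      exists_exists_eq_and, Fin.valEmbedding_apply] at hm ⊢
    obtain ⟨i, hi⟩ := hm
    by_contra hm
    exact hfree i ⟨m, by omega⟩ (fun ⟨a, ha⟩ => hm ⟨a, congrArg Fin.val ha⟩) hi.symm

theorem eq_of_isLowerSet_of_sort_eq {x y : hcConfig n k}
    (hx : IsLowerSet (x.sites.map Fin.valEmbedding : Set ℕ))
    (hy : IsLowerSet (y.sites.map Fin.valEmbedding : Set ℕ))
    (h : Tuple.sort x.1 = Tuple.sort y.1) : x = y := by
  have hsites : x.sites = y.sites := map_injective Fin.valEmbedding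
    (eq_of_isLowerSet_of_card_eq hx hy (by rw [card_map, card_map, x.card_sites, y.card_sites]))
  exact hcConfig.sitesSortEquiv.injective (Prod.ext (Subtype.ext hsites) h)

theorem reachable_of_sort_eq {x y : hcConfig n k} (h : Tuple.sort x.1 = Tuple.sort y.1) :
    (hcGraph n k).Reachable x y := by
  induction hm : ∑ i, (x.1 i : ℕ) + ∑ i, (y.1 i : ℕ) using Nat.strong_induction_on
    generalizing x y with
  | _ m ih =>
  rcases exists_adj_sum_lt_or_isLowerSet x with ⟨x', hadj, hlt⟩ | hx
  · exact hadj.reachable.trans (ih _ (by omega) ((sort_eq_of_adj hadj).symm.trans h) rfl)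
  rcases exists_adj_sum_lt_or_isLowerSet y with ⟨y', hadj, hlt⟩ | hy
  · exact (ih _ (by omega) (h.trans (sort_eq_of_adj hadj)) rfl).trans hadj.reachable.symm
  · exact eq_of_isLowerSet_of_sort_eq hx hy h ▸ SimpleGraph.Reachable.refl x

theorem reachable_iff_sort_eq (x y : hcConfig n k) :
    (hcGraph n k).Reachable x y ↔ Tuple.sort x.1 = Tuple.sort y.1 :=
  ⟨sort_eq_of_reachable, reachable_of_sort_eq⟩

end hcGraph

theorem stmt15_general (n k : ℕ) (hkn : k ≤ n) :
    Nat.card (hcGraph n k).ConnectedComponent = k.factorial ∧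
      ∀ c : (hcGraph n k).ConnectedComponent,
        Nat.card {x : {x : Fin k → Fin n // Function.Injective x} //
          (hcGraph n k).connectedComponentMk x = c} = n.choose k := by
  have hreach := hcGraph.reachable_iff_sort_eq (n := n) (k := k)
  refine ⟨?_, fun c => ?_⟩
  · rw [Nat.card_congr (SimpleGraph.connectedComponentEquivOfReachableIff
      (hcConfig.sort_surjective hkn) hreach), Nat.card_perm, Nat.card_fin]
  · induction c using SimpleGraph.ConnectedComponent.ind with
    | _ x =>
    rw [Nat.card_congr ((Equiv.subtypeEquivRight fun y =>
        SimpleGraph.ConnectedComponent.eq.trans (hreach y x)).trans (hcConfig.sortFiberEquiv _)),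
      Nat.card_eq_fintype_card, Fintype.card_finset_len, Fintype.card_fin]

/-- the hard-core configuration graph has exactly `k!` connected
components, each containing exactly `binom(n, k)` vertices. -/
theorem stmt15 (n k : ℕ) (hk : 1 ≤ k) (hkn : k ≤ n) :
    Nat.card (hcGraph n k).ConnectedComponent = k.factorial ∧
      ∀ c : (hcGraph n k).ConnectedComponent,
        Nat.card {x : {x : Fin k → Fin n // Function.Injective x} //
          (hcGraph n k).connectedComponentMk x = c} = n.choose k :=
  stmt15_general n k hkn
end
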